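/- arXiv:2204.11264 — 8 statements merged into one kernel-verified Lean document; each statement's English description precedes it below -/
import Mathlib

section
/- Let s ≥ 2, let A ∈ ℝ^{s×s} be lower triangular, and let c = A e. If τ^(2) = 0 and τ^(3) = 0, then a₁₁ = 0 and c₁ = c₂ = 0. In particular, any DIRK scheme with stage order at least 3 has its first two abscissas equal (to zero), i.e., it is 2-confluent and hence reducible; consequently an irreducible DIRK scheme has stage order at most 2. -/
open Matrix

/-- If a lower-triangular `A` with `c = A e` satisfies `τ⁽²⁾ = 0` and `τ⁽³⁾ = 0`,
then `a₁₁ = 0` and `c₁ = c₂ = 0`: any DIRK scheme with stage order ≥ 3 is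
2-confluent (hence reducible), so an irreducible DIRK scheme has stage order ≤ 2. -/
theorem stmt1 {s : ℕ} (hs : 2 ≤ s) (A : Matrix (Fin s) (Fin s) ℝ)
    (hlow : ∀ i j : Fin s, i < j → A i j = 0)
    (c : Fin s → ℝ) (hc : c = A.mulVec fun _ => 1)
    (hτ₂ : A.mulVec c - (1 / 2 : ℝ) • (fun i => c i ^ 2) = 0)
    (hτ₃ : A.mulVec (fun i => c i ^ 2) - (1 / 3 : ℝ) • (fun i => c i ^ 3) = 0) :
    A ⟨0, by omega⟩ ⟨0, by omega⟩ = 0 ∧ c ⟨0, by omega⟩ = 0 ∧ c ⟨1, by omega⟩ = 0 := by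
  set i0 : Fin s := ⟨0, by omega⟩ with hi0
  set i1 : Fin s := ⟨1, by omega⟩ with hi1
  have hrow0 : ∀ v : Fin s → ℝ, A.mulVec v i0 = A i0 i0 * v i0 := by
    intro v
    simp only [mulVec, dotProduct]
    exact Finset.sum_eq_single i0 (fun j _ hj => by
      rw [hlow i0 j (by
        rcases Fin.lt_or_lt_of_ne hj with h | h
        · exact absurd h (by simp [hi0, Fin.lt_def])
        · exact h), zero_mul]) (by simp)
  have hrow1 : ∀ v : Fin s → ℝ,
      A.mulVec v i1 = A i1 i0 * v i0 + A i1 i1 * v i1 := by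
    intro v
    simp only [mulVec, dotProduct]
    rw [← Finset.sum_subset (Finset.subset_univ ({i0, i1} : Finset (Fin s)))
      (fun j _ hj => by
        rw [hlow i1 j, zero_mul]
        simp only [Finset.mem_insert, Finset.mem_singleton, not_or] at hj
        have : (1 : ℕ) < j.val := by
          rcases Nat.lt_or_ge 1 j.val with h | h
          · exact h
          · interval_cases hv : j.val
            · exact absurd (Fin.ext hv) hj.1
            · exact absurd (Fin.ext hv) hj.2
        exact this)]
    rw [Finset.sum_pair (by simp [hi0, hi1, Fin.ext_iff])]
  have h20 := congrFun hτ₂ i0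
  have h21 := congrFun hτ₂ i1
  have h31 := congrFun hτ₃ i1
  simp only [Pi.sub_apply, Pi.smul_apply, Pi.zero_apply, smul_eq_mul, sub_eq_zero,
    hrow0, hrow1] at h20 h21 h31
  have hc0 : c i0 = A i0 i0 := by rw [hc, hrow0]; ring
  have ha00 : A i0 i0 = 0 := by nlinarith [h20, hc0]
  have hc0z : c i0 = 0 := by rw [hc0, ha00]
  rw [hc0z] at h21 h31
  have hc1 : c i1 ^ 3 = 0 := by linear_combination 6 * h31 - 6 * c i1 * h21
  have hc1z : c i1 = 0 := by
    exact pow_eq_zero_iff (by norm_num) |>.mp hc1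
  exact ⟨ha00, hc0z, hc1z⟩
end

section
/- For an s-stage RK scheme (A, b) with c = A e and any q ≥ 1, the following are equivalent: (i) b^T A^j τ^(k) = 0 for all 0 ≤ j ≤ s−1 and 1 ≤ k ≤ q (weak stage order at least q); (ii) for every ζ ∈ ℝ such that I − ζ A is invertible, b^T (I − ζ A)^{-1} τ^(k) = 0 for all 1 ≤ k ≤ q. In other words, weak stage order q is exactly the condition needed to annihilate the resolvent terms b^T (I − ζ A)^{-1} τ^(k) that cause order reduction for stiff linear problems. -/
/-!
Both conditions say that `t = τ⁽ᵏ⁾` lies in the subspace `W` of vectors `w` with `bᵀ Aᵐ w = 0`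
for all `m`: by Cayley–Hamilton the powers `m < s` already suffice. `W` is `A`-invariant, hence
invariant under `I − ζA` and, by finite dimensionality, under its inverse; this gives (i) ⇒ (ii).
Conversely, `gₘ(ζ) = bᵀ Aᵐ (I − ζA)⁻¹ t` is continuous at `0` and satisfies
`gₘ(ζ) = bᵀ Aᵐ t + ζ gₘ₊₁(ζ)` near `0`; if `g₀` vanishes near `0`, induction on `m` shows that
every `gₘ` does, and evaluating at `ζ = 0` gives `bᵀ Aᵐ t = 0`.
-/

open Matrix Polynomial Filter Topology

theorem Submodule.map_eq_self_of_injective {K V : Type*} [DivisionRing K] [AddCommGroup V]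
    [Module K V] [FiniteDimensional K V] {W : Submodule K V} {f : V →ₗ[K] V}
    (hf : Function.Injective f) (hW : W.map f ≤ W) : W.map f = W :=
  Submodule.eq_of_le_of_finrank_eq hW (Submodule.equivMapOfInjective f hf W).finrank_eq.symm

namespace Matrix

section Field

variable {n K : Type*} [Fintype n] [DecidableEq n] [Field K]

theorem nonsing_inv_mulVec_mem {M : Matrix n n K} (hM : IsUnit M.det) {W : Submodule K (n → K)}
    (hW : ∀ w ∈ W, M *ᵥ w ∈ W) {t : n → K} (ht : t ∈ W) : M⁻¹ *ᵥ t ∈ W := by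
  have hinj : Function.Injective M.mulVecLin :=
    mulVec_injective_iff_isUnit.mpr ((isUnit_iff_isUnit_det M).mpr hM)
  rw [← Submodule.map_eq_self_of_injective hinj (Submodule.map_le_iff_le_comap.mpr hW)] at ht
  obtain ⟨w, hw, rfl⟩ := ht
  rwa [mulVecLin_apply, mulVec_mulVec, nonsing_inv_mul M hM, one_mulVec]

theorem nonsing_inv_one_sub_smul_mulVec {A : Matrix n n K} {ζ : K} (hζ : IsUnit (1 - ζ • A).det)
    (t : n → K) : (1 - ζ • A)⁻¹ *ᵥ t = t + ζ • A *ᵥ (1 - ζ • A)⁻¹ *ᵥ t := by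
  have h := congrArg (· *ᵥ t) (mul_nonsing_inv (1 - ζ • A) hζ)
  simp only [← mulVec_mulVec, sub_mulVec, one_mulVec, smul_mulVec] at h
  exact eq_add_of_sub_eq h

def krylovAnnihilator (A : Matrix n n K) (b : n → K) : Submodule K (n → K) where
  carrier := {w | ∀ m : ℕ, b ⬝ᵥ (A ^ m) *ᵥ w = 0}
  add_mem' hv hw m := by simp [mulVec_add, hv m, hw m]
  zero_mem' m := by simp
  smul_mem' c w hw m := by simp [mulVec_smul, hw m]

variable {A : Matrix n n K} {b w : n → K}

theorem mulVec_mem_krylovAnnihilator (hw : w ∈ krylovAnnihilator A b) :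
    A *ᵥ w ∈ krylovAnnihilator A b := fun m => by
  rw [mulVec_mulVec, ← pow_succ]
  exact hw (m + 1)

theorem dotProduct_aeval_mulVec_eq_zero (h : ∀ j < Fintype.card n, b ⬝ᵥ (A ^ j) *ᵥ w = 0)
    {p : K[X]} (hp : p.degree < Fintype.card n) : b ⬝ᵥ aeval A p *ᵥ w = 0 := by
  rw [aeval_eq_sum_range, sum_mulVec, dotProduct_sum]
  refine Finset.sum_eq_zero fun i _ => ?_
  rw [smul_mulVec, dotProduct_smul]
  by_cases hi : i < Fintype.card n
  · rw [h i hi, smul_zero]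
  · rw [coeff_eq_zero_of_degree_lt (hp.trans_le (by exact_mod_cast not_lt.mp hi)), zero_smul]

theorem mem_krylovAnnihilator_iff_forall_lt :
    w ∈ krylovAnnihilator A b ↔ ∀ j < Fintype.card n, b ⬝ᵥ (A ^ j) *ᵥ w = 0 := by
  refine ⟨fun hw j _ => hw j, fun h m => ?_⟩
  rw [pow_eq_aeval_mod_charpoly]
  exact dotProduct_aeval_mulVec_eq_zero h
    ((degree_modByMonic_lt _ A.charpoly_monic).trans_eq A.charpoly_degree_eq_dim)

theorem nonsing_inv_one_sub_smul_mulVec_mem_krylovAnnihilator {ζ : K}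
    (hζ : IsUnit (1 - ζ • A).det) (hw : w ∈ krylovAnnihilator A b) :
    (1 - ζ • A)⁻¹ *ᵥ w ∈ krylovAnnihilator A b := by
  refine nonsing_inv_mulVec_mem hζ (fun v hv => ?_) hw
  rw [sub_mulVec, one_mulVec, smul_mulVec]
  exact sub_mem hv (Submodule.smul_mem _ ζ (mulVec_mem_krylovAnnihilator hv))

end Field

section NormedField

variable {n 𝕜 : Type*} [Fintype n] [DecidableEq n] [NontriviallyNormedField 𝕜]

theorem continuousAt_nonsing_inv_one_sub_smul (A : Matrix n n 𝕜) :
    ContinuousAt (fun ζ : 𝕜 => (1 - ζ • A)⁻¹) 0 := by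
  refine (continuousAt_matrix_inv 1 ?_).comp_of_eq
    (continuous_const.sub (continuous_id.smul continuous_const)).continuousAt (by simp)
  rw [det_one, Ring.inverse_eq_inv']
  exact continuousAt_inv₀ one_ne_zero

theorem eventually_isUnit_det_one_sub_smul (A : Matrix n n 𝕜) :
    ∀ᶠ ζ in 𝓝 (0 : 𝕜), IsUnit (1 - ζ • A).det := by
  have hdet : Continuous fun ζ : 𝕜 => (1 - ζ • A).det :=
    (continuous_const.sub (continuous_id.smul continuous_const)).matrix_det
  filter_upwards [hdet.continuousAt.eventually_ne (by simp : (1 - (0 : 𝕜) • A).det ≠ 0)]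
    with ζ hζ using hζ.isUnit

theorem mem_krylovAnnihilator_of_resolvent {A : Matrix n n 𝕜} {b t : n → 𝕜}
    (h : ∀ ζ : 𝕜, (1 - ζ • A).det ≠ 0 → b ⬝ᵥ (1 - ζ • A)⁻¹ *ᵥ t = 0) :
    t ∈ krylovAnnihilator A b := by
  set g : ℕ → 𝕜 → 𝕜 := fun m ζ => b ⬝ᵥ (A ^ m) *ᵥ (1 - ζ • A)⁻¹ *ᵥ t
  have hg_cont (m : ℕ) : ContinuousAt (g m) 0 :=
    (continuous_const.dotProduct (continuous_const.matrix_mulVec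
      (continuous_id.matrix_mulVec continuous_const))).continuousAt.comp
        (continuousAt_nonsing_inv_one_sub_smul A)
  have hg_zero (m : ℕ) : g m 0 = b ⬝ᵥ (A ^ m) *ᵥ t := by simp [g]
  -- expanding `(1 - ζA)⁻¹ = 1 + ζA(1 - ζA)⁻¹` shifts the power of `A` by one
  have hg_succ (m : ℕ) : ∀ᶠ ζ in 𝓝 0, g m ζ = b ⬝ᵥ (A ^ m) *ᵥ t + ζ * g (m + 1) ζ := by
    filter_upwards [eventually_isUnit_det_one_sub_smul A] with ζ hζ
    rw [show g m ζ = _ from congrArg (b ⬝ᵥ (A ^ m) *ᵥ ·) (nonsing_inv_one_sub_smul_mulVec hζ t)]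
    simp only [g, mulVec_add, mulVec_smul, dotProduct_add, dotProduct_smul, smul_eq_mul,
      mulVec_mulVec, ← mul_assoc, ← pow_succ]
  suffices hg : ∀ m, g m =ᶠ[𝓝 0] 0 from fun m => hg_zero m ▸ (hg m).eq_of_nhds
  intro m
  induction m with
  | zero =>
    filter_upwards [eventually_isUnit_det_one_sub_smul A] with ζ hζ
    simpa [g] using h ζ hζ.ne_zero
  | succ m ih =>
    rw [← (hg_cont _).eventuallyEq_nhds_iff_eventuallyEq_nhdsNE continuous_zero.continuousAt]
    have hm : b ⬝ᵥ (A ^ m) *ᵥ t = 0 := hg_zero m ▸ ih.eq_of_nhds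
    filter_upwards [eventually_nhdsWithin_of_eventually_nhds (ih.and (hg_succ m)),
      self_mem_nhdsWithin] with ζ ⟨hzero, hstep⟩ (hζ : ζ ≠ 0)
    rw [hzero, Pi.zero_apply, hm, zero_add, eq_comm, mul_eq_zero] at hstep
    exact hstep.resolve_left hζ

theorem forall_lt_dotProduct_pow_mulVec_eq_zero_iff (A : Matrix n n 𝕜) (b t : n → 𝕜) :
    (∀ j < Fintype.card n, b ⬝ᵥ (A ^ j) *ᵥ t = 0) ↔
      ∀ ζ : 𝕜, (1 - ζ • A).det ≠ 0 → b ⬝ᵥ (1 - ζ • A)⁻¹ *ᵥ t = 0 := by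
  rw [← mem_krylovAnnihilator_iff_forall_lt]
  refine ⟨fun ht ζ hζ => ?_, mem_krylovAnnihilator_of_resolvent⟩
  simpa using nonsing_inv_one_sub_smul_mulVec_mem_krylovAnnihilator hζ.isUnit ht 0

end NormedField

end Matrix

theorem stmt4_general {s : ℕ} (A : Matrix (Fin s) (Fin s) ℝ) (b : Fin s → ℝ)
    (q : ℕ)
    (τ : ℕ → Fin s → ℝ) :
    (∀ j, j < s → ∀ k, 1 ≤ k → k ≤ q → b ⬝ᵥ (A ^ j).mulVec (τ k) = 0) ↔
      ∀ ζ : ℝ, (1 - ζ • A).det ≠ 0 →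
        ∀ k, 1 ≤ k → k ≤ q → b ⬝ᵥ (1 - ζ • A)⁻¹.mulVec (τ k) = 0 := by
  have key (k : ℕ) := forall_lt_dotProduct_pow_mulVec_eq_zero_iff A b (τ k)
  simp only [Fintype.card_fin] at key
  constructor
  · intro h ζ hζ k hk hkq
    exact (key k).1 (fun j hj => h j hj k hk hkq) ζ hζ
  · intro h j hj k hk hkq
    exact (key k).2 (fun ζ hζ => h ζ hζ k hk hkq) j hj

/-- Weak stage order at least `q` (i.e. `bᵀ Aʲ τ⁽ᵏ⁾ = 0` for `0 ≤ j ≤ s−1`, `1 ≤ k ≤ q`)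
holds iff for every `ζ ∈ ℝ` with `I − ζA` invertible one has
`bᵀ (I − ζA)⁻¹ τ⁽ᵏ⁾ = 0` for all `1 ≤ k ≤ q`. -/
theorem stmt4 {s : ℕ} (A : Matrix (Fin s) (Fin s) ℝ) (b : Fin s → ℝ)
    (c : Fin s → ℝ) (hc : c = A.mulVec fun _ => 1)
    (q : ℕ) (hq : 1 ≤ q)
    (τ : ℕ → Fin s → ℝ)
    (hτ : ∀ k, τ k = A.mulVec (fun i => c i ^ (k - 1)) - (k : ℝ)⁻¹ • fun i => c i ^ k) :
    (∀ j, j < s → ∀ k, 1 ≤ k → k ≤ q → b ⬝ᵥ (A ^ j).mulVec (τ k) = 0) ↔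
      ∀ ζ : ℝ, (1 - ζ • A).det ≠ 0 →
        ∀ k, 1 ≤ k → k ≤ q → b ⬝ᵥ (1 - ζ • A)⁻¹.mulVec (τ k) = 0 :=
  stmt4_general A b q τ
end

section
/- (WSO limitation theorem.) There is no s-stage DIRK scheme (A lower triangular and invertible, c = A e) satisfying the consistency condition b^T e = 1, having weak stage order at least 4 (i.e., b^T A^j τ^(k) = 0 for all 0 ≤ j ≤ s−1 and 1 ≤ k ≤ 4), and such that there exists μ ∈ ℝ with (A − μ I) τ^(k) = 0 for k = 1, …, 4 (i.e., the minimal polynomial of K_4 has degree ≤ 1). Equivalently: a consistent DIRK scheme with invertible A whose subspace K_q has minimal polynomial of degree at most 1 is limited to weak stage order q ≤ 3. -/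
open Matrix

/-- Scalar elimination lemma: the three row equations force `x = m`. -/
private lemma wso_key (a m x : ℝ) (ha : a ≠ 0) (hm : m ≠ 0)
    (h2 : (m - a) * (2*a*x + 2*m*(x - a) - x^2) - m^2*(x - a) = 0)
    (h3 : (m - a) * (3*a*x^2 + 3*m^2*(x - a) - x^3) - 2*m^3*(x - a) = 0)
    (h4 : (m - a) * (4*a*x^3 + 4*m^3*(x - a) - x^4) - 3*m^4*(x - a) = 0) :
    x = m := by
  by_contra hx
  have hxm : x - m ≠ 0 := sub_ne_zero.mpr hx
  have hP : (a - m) * x - (2*a^2 - a*m) = 0 := by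
    have h : (x - m) * ((a - m) * x - (2*a^2 - a*m)) = 0 := by linear_combination h2
    rcases mul_eq_zero.mp h with h | h
    · exact absurd h hxm
    · exact h
  have ham : a ≠ m := by
    intro h
    apply ha
    have h2' : a ^ 2 = 0 := by rw [h] at hP ⊢; linear_combination -hP
    exact pow_eq_zero_iff (two_ne_zero) |>.mp h2'
  have hams : a - m ≠ 0 := sub_ne_zero.mpr ham
  have ha2 : a ^ 2 ≠ 0 := pow_ne_zero 2 ha
  have H3 : 4*a^5 - 16*a^4*m + 24*a^3*m^2 - 18*a^2*m^3 + 7*a*m^4 - m^5 = 0 := by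
    have h : a^2 * (4*a^5 - 16*a^4*m + 24*a^3*m^2 - 18*a^2*m^3 + 7*a*m^4 - m^5) = 0 := by
      linear_combination (-(a-m)^3) * h3 +
        (x^2*(a^3 - 3*a^2*m + 3*a*m^2 - m^3) + x*(-a^4 + 4*a^3*m - 5*a^2*m^2 + 2*a*m^3)
          + (-2*a^5 + 7*a^4*m - 10*a^3*m^2 + 9*a^2*m^3 - 5*a*m^4 + m^5)) * hP
    rcases mul_eq_zero.mp h with h | h
    · exact absurd h ha2
    · exact h
  have H4 : 16*a^7 - 64*a^6*m + 96*a^5*m^2 - 64*a^4*m^3 + 10*a^3*m^4 + 12*a^2*m^5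
      - 7*a*m^6 + m^7 = 0 := by
    have h : a^2 * (16*a^7 - 64*a^6*m + 96*a^5*m^2 - 64*a^4*m^3 + 10*a^3*m^4 + 12*a^2*m^5
        - 7*a*m^6 + m^7) = 0 := by
      linear_combination (-(a-m)^4) * h4 +
        (x^3*(a^4 - 4*a^3*m + 6*a^2*m^2 - 4*a*m^3 + m^4)
          + x^2*(-2*a^5 + 9*a^4*m - 15*a^3*m^2 + 11*a^2*m^3 - 3*a*m^4)
          + x*(-4*a^6 + 16*a^5*m - 23*a^4*m^2 + 14*a^3*m^3 - 3*a^2*m^4)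
          + (-8*a^7 + 28*a^6*m - 34*a^5*m^2 + 13*a^4*m^3 + 10*a^3*m^4 - 15*a^2*m^5
              + 7*a*m^6 - m^7)) * hP
    rcases mul_eq_zero.mp h with h | h
    · exact absurd h ha2
    · exact h
  have hg : (a - m) * (2*a^2 - 2*a*m + m^2) * m^5 = 0 := by
    linear_combination (7*m - 4*a) * H4 + (8*m^3 - 28*a^2*m + 16*a^3) * H3
  have h1 : 0 < (a - m)^2 := lt_of_le_of_ne (sq_nonneg _) ((pow_ne_zero 2 hams).symm)
  have hpos : (0:ℝ) < 2*a^2 - 2*a*m + m^2 := by nlinarith [sq_nonneg a, h1]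
  have : (a - m) * (2*a^2 - 2*a*m + m^2) * m^5 ≠ 0 :=
    mul_ne_zero (mul_ne_zero hams (ne_of_gt hpos)) (pow_ne_zero 5 hm)
  exact this hg

/-- Row equation obtained from the eigenvector property of `τ` for each stage `i`,
assuming all earlier abscissae equal `μ`. -/
private lemma wso_rowE {s : ℕ} (A : Matrix (Fin s) (Fin s) ℝ) (c : Fin s → ℝ)
    (μ r : ℝ) (p : ℕ) (t : Fin s → ℝ)
    (hlow : ∀ i j : Fin s, i < j → A i j = 0)
    (hrow : ∀ i, ∑ j, A i j = c i)
    (ht : t = A.mulVec (fun i => c i ^ p) - r⁻¹ • fun i => c i ^ (p+1))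
    (heig : (A - μ • 1).mulVec t = 0)
    (i : Fin s) (IH : ∀ j, j < i → c j = μ) :
    (μ - A i i) * (A i i * c i ^ p + (c i - A i i) * μ ^ p - r⁻¹ * c i ^ (p+1))
      = (c i - A i i) * (μ ^ (p+1) - r⁻¹ * μ ^ (p+1)) := by
  have hAv : ∀ j : Fin s, j ≤ i →
      A.mulVec (fun l => c l ^ p) j = A j j * c j ^ p + (c j - A j j) * μ ^ p := by
    intro j hj
    have hsum : ∑ l, A j l * (c l ^ p - μ ^ p) = A j j * (c j ^ p - μ ^ p) := by
      apply Finset.sum_eq_single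
      · intro l _ hl
        rcases lt_or_gt_of_ne hl with h | h
        · rw [IH l (lt_of_lt_of_le h hj), sub_self, mul_zero]
        · rw [hlow j l h, zero_mul]
      · intro h; exact absurd (Finset.mem_univ j) h
    have hmv : A.mulVec (fun l => c l ^ p) j = ∑ l, A j l * c l ^ p := by
      simp [Matrix.mulVec, dotProduct]
    have hsplit : ∑ l, A j l * c l ^ p
        = ∑ l, (A j l * (c l ^ p - μ ^ p) + A j l * μ ^ p) :=
      Finset.sum_congr rfl (fun l _ => by ring)
    rw [hmv, hsplit, Finset.sum_add_distrib, hsum, ← Finset.sum_mul, hrow j]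
    ring
  have hti : t i = A i i * c i ^ p + (c i - A i i) * μ ^ p - r⁻¹ * c i ^ (p+1) := by
    rw [ht]; simp only [Pi.sub_apply, Pi.smul_apply, smul_eq_mul]
    rw [hAv i le_rfl]
  have htj : ∀ j, j < i → t j = μ ^ (p+1) - r⁻¹ * μ ^ (p+1) := by
    intro j hj
    have h1 := hAv j (le_of_lt hj)
    have hcj := IH j hj
    rw [ht]; simp only [Pi.sub_apply, Pi.smul_apply, smul_eq_mul]
    rw [h1, hcj]; ring
  have hAt : A.mulVec t i
      = A i i * (t i - (μ ^ (p+1) - r⁻¹ * μ ^ (p+1)))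
        + c i * (μ ^ (p+1) - r⁻¹ * μ ^ (p+1)) := by
    have hsum : ∑ l, A i l * (t l - (μ ^ (p+1) - r⁻¹ * μ ^ (p+1)))
        = A i i * (t i - (μ ^ (p+1) - r⁻¹ * μ ^ (p+1))) := by
      apply Finset.sum_eq_single
      · intro l _ hl
        rcases lt_or_gt_of_ne hl with h | h
        · rw [htj l h, sub_self, mul_zero]
        · rw [hlow i l h, zero_mul]
      · intro h; exact absurd (Finset.mem_univ i) h
    have hmv : A.mulVec t i = ∑ l, A i l * t l := by
      simp [Matrix.mulVec, dotProduct]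
    have hsplit : ∑ l, A i l * t l
        = ∑ l, (A i l * (t l - (μ ^ (p+1) - r⁻¹ * μ ^ (p+1)))
            + A i l * (μ ^ (p+1) - r⁻¹ * μ ^ (p+1))) :=
      Finset.sum_congr rfl (fun l _ => by ring)
    rw [hmv, hsplit, Finset.sum_add_distrib, hsum, ← Finset.sum_mul, hrow i]
  have heigi : A.mulVec t i = μ * t i := by
    have h := congrFun heig i
    rw [Matrix.sub_mulVec] at h
    simp only [Matrix.smul_mulVec, Matrix.one_mulVec, Pi.sub_apply, Pi.smul_apply,
      Pi.zero_apply, smul_eq_mul] at h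
    linarith
  linear_combination (-1) * heigi + hAt + (-(μ - A i i)) * hti

/-- WSO limitation theorem: there is no DIRK scheme (lower triangular, invertible `A`,
`c = A e`) that is consistent (`bᵀ e = 1`), has weak stage order ≥ 4, and whose
subspace `K₄` has a minimal polynomial of degree ≤ 1 (i.e. `(A − μI) τ⁽ᵏ⁾ = 0` for
`k = 1,…,4` for some `μ`). -/
theorem stmt6 {s : ℕ} (A : Matrix (Fin s) (Fin s) ℝ) (b : Fin s → ℝ)
    (hlow : ∀ i j : Fin s, i < j → A i j = 0)
    (hdet : A.det ≠ 0)
    (c : Fin s → ℝ) (hc : c = A.mulVec fun _ => 1)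
    (hb : (b ⬝ᵥ fun _ => 1) = 1)
    (τ : ℕ → Fin s → ℝ)
    (hτ : ∀ k, τ k = A.mulVec (fun i => c i ^ (k - 1)) - (k : ℝ)⁻¹ • fun i => c i ^ k)
    (hwso : ∀ j, j < s → ∀ k, 1 ≤ k → k ≤ 4 → b ⬝ᵥ (A ^ j).mulVec (τ k) = 0)
    (μ : ℝ) (hμ : ∀ k, 1 ≤ k → k ≤ 4 → (A - μ • 1).mulVec (τ k) = 0) :
    False := by
  rcases Nat.eq_zero_or_pos s with hs | hs
  · subst hs
    simp [dotProduct] at hb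
  have hrow : ∀ i, ∑ j, A i j = c i := by
    intro i; rw [hc]; simp [Matrix.mulVec, dotProduct]
  have hdiag : ∀ i, A i i ≠ 0 := by
    have hdet2 : A.det = ∏ i, A i i :=
      Matrix.det_of_lowerTriangular A (fun i j h => hlow i j h)
    intro i h
    exact hdet (by rw [hdet2]; exact Finset.prod_eq_zero (Finset.mem_univ i) h)
  have ht2 : τ 2 = A.mulVec (fun i => c i ^ 1) - (2:ℝ)⁻¹ • fun i => c i ^ 2 := by
    rw [hτ 2]; norm_num
  have ht3 : τ 3 = A.mulVec (fun i => c i ^ 2) - (3:ℝ)⁻¹ • fun i => c i ^ 3 := by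
    rw [hτ 3]; norm_num
  have ht4 : τ 4 = A.mulVec (fun i => c i ^ 3) - (4:ℝ)⁻¹ • fun i => c i ^ 4 := by
    rw [hτ 4]; norm_num
  have hμ2 := hμ 2 (by norm_num) (by norm_num)
  have hμ3 := hμ 3 (by norm_num) (by norm_num)
  have hμ4 := hμ 4 (by norm_num) (by norm_num)
  -- μ is nonzero (it equals the first diagonal entry)
  set i0 : Fin s := ⟨0, hs⟩ with hi0
  have hIH0 : ∀ j : Fin s, j < i0 → c j = μ := by
    intro j hj
    exact absurd (Fin.lt_def.mp hj) (Nat.not_lt_zero _)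
  have hc0 : c i0 = A i0 i0 := by
    rw [← hrow i0]
    apply Finset.sum_eq_single
    · intro j _ hj
      refine hlow i0 j (Fin.lt_def.mpr (Nat.pos_of_ne_zero ?_))
      exact fun h => hj (Fin.ext h)
    · intro h; exact absurd (Finset.mem_univ i0) h
  have e20 := wso_rowE A c μ 2 1 (τ 2) hlow hrow ht2 hμ2 i0 hIH0
  rw [hc0] at e20
  have hμa : (μ - A i0 i0) * (A i0 i0)^2 = 0 := by linear_combination 2 * e20
  have hmne : μ ≠ 0 := by
    rcases mul_eq_zero.mp hμa with h | h
    · have : μ = A i0 i0 := by linarith [sub_eq_zero.mp h]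
      rw [this]; exact hdiag i0
    · exact absurd h (pow_ne_zero 2 (hdiag i0))
  -- every abscissa equals μ
  have key_i : ∀ i : Fin s, (∀ j, j < i → c j = μ) → c i = μ := by
    intro i IH
    have e2 := wso_rowE A c μ 2 1 (τ 2) hlow hrow ht2 hμ2 i IH
    have e3 := wso_rowE A c μ 3 2 (τ 3) hlow hrow ht3 hμ3 i IH
    have e4 := wso_rowE A c μ 4 3 (τ 4) hlow hrow ht4 hμ4 i IH
    apply wso_key (A i i) μ (c i) (hdiag i) hmne
    · linear_combination 2 * e2
    · linear_combination 3 * e3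
    · linear_combination 4 * e4
  have hall : ∀ n : ℕ, ∀ hn : n < s, c ⟨n, hn⟩ = μ := by
    intro n
    induction n using Nat.strong_induction_on with
    | _ n IH =>
      intro hn
      apply key_i ⟨n, hn⟩
      intro j hj
      have h := IH j.val (Fin.lt_def.mp hj) j.isLt
      simpa using h
  have hcall : ∀ i : Fin s, c i = μ := fun i => by
    have := hall i.val i.isLt; simpa using this
  -- final contradiction via consistency and WSO at k = 2
  have hτ2 : ∀ i, τ 2 i = μ^2 - (2:ℝ)⁻¹ * μ^2 := by
    intro i
    rw [ht2]; simp only [Pi.sub_apply, Pi.smul_apply, smul_eq_mul]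
    have hAv : A.mulVec (fun l => c l ^ 1) i = μ^2 := by
      have hmv : A.mulVec (fun l => c l ^ 1) i = ∑ l, A i l * c l ^ 1 := by
        simp [Matrix.mulVec, dotProduct]
      rw [hmv]
      calc ∑ l, A i l * c l ^ 1 = ∑ l, A i l * μ :=
            Finset.sum_congr rfl (fun l _ => by rw [hcall l]; ring)
        _ = (∑ l, A i l) * μ := by rw [Finset.sum_mul]
        _ = μ^2 := by rw [hrow i, hcall i]; ring
    rw [hAv, hcall i]
  have hw := hwso 0 hs 2 (by norm_num) (by norm_num)
  rw [pow_zero, Matrix.one_mulVec] at hw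
  have hdp : b ⬝ᵥ τ 2 = μ^2 - (2:ℝ)⁻¹ * μ^2 := by
    have h1 : b ⬝ᵥ τ 2 = ∑ i, b i * τ 2 i := by simp [dotProduct]
    have h2 : (b ⬝ᵥ fun _ => 1) = ∑ i, b i := by simp [dotProduct]
    rw [h1]
    calc ∑ i, b i * τ 2 i = ∑ i, b i * (μ^2 - (2:ℝ)⁻¹ * μ^2) :=
          Finset.sum_congr rfl (fun i _ => by rw [hτ2 i])
      _ = (∑ i, b i) * (μ^2 - (2:ℝ)⁻¹ * μ^2) := by rw [Finset.sum_mul]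
      _ = μ^2 - (2:ℝ)⁻¹ * μ^2 := by rw [← h2, hb]; ring
  have hμ20 : μ ^ 2 = 0 := by
    rw [hw] at hdp
    linarith
  exact hmne (pow_eq_zero_iff two_ne_zero |>.mp hμ20)
end

section
/- (Lower bound of the stage-count theorem.) Let (A, b) be an s-stage DIRK scheme with A lower triangular and invertible, c = A e, and b^T e = 1 (order at least 1). Let n_c denote the number of distinct values among the abscissas c₁, …, c_s. If the scheme has weak stage order at least q and q ≤ 2 n_c − 1, then dim(K_q) ≥ ⌊q/2⌋. -/
/-!
`K_q` is `A`-invariant (Cayley–Hamilton) and contains every `τ^(k)` with `k ≤ q`. Since `A` is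
lower triangular, all of this survives the passage to a leading principal block of `A` whose
abscissas take exactly `m = ⌊q/2⌋` distinct values, and that passage can only lower the
dimension. So let `K` be an invariant subspace of an invertible `B` containing the residuals of
abscissas `c` with `m` distinct values, `2m ≤ q`.

Telescoping the residuals gives `c^k - k! B^k e ∈ K` for `k ≤ q`, hence `L(p)(B) e ∈ K` for every
`p` of degree `≤ q` vanishing at the abscissas, where `L` is the formal Laplace transform
`X^j ↦ j! X^j`. If `e ∉ K`, the polynomials `f` with `f(B) e ∈ K` form a proper ideal `(ψ)`, and
`ψ(0) ≠ 0` because `B` is invertible. It contains `L(X^l p₀)` for `l ≤ q - m`, where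
`p₀ = ∏ (X - γ)` over the distinct abscissas. As `L(X f) = X (X L(f))'` and differentiation
lowers the multiplicity of a nonzero root by exactly one, a root `ρ ≠ 0` of `ψ` is a root of
`L(p₀)` of multiplicity `> q - m ≥ m = deg L(p₀)`: absurd. So `e ∈ K`, hence `c^k ∈ K` for
`k < m`, and these `m` vectors are linearly independent (Vandermonde).
-/

open Matrix Polynomial Finset
open scoped Nat

namespace Polynomial

section Semiring

variable {R : Type*} [Semiring R]

noncomputable def laplace (p : R[X]) : R[X] :=
  ∑ j ∈ range (p.natDegree + 1), monomial j (p.coeff j * j !)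

@[simp]
lemma coeff_laplace (p : R[X]) (i : ℕ) : (laplace p).coeff i = p.coeff i * i ! := by
  rw [laplace, finsetSum_coeff, sum_eq_single i, coeff_monomial, if_pos rfl]
  · intro j _ hji
    rw [coeff_monomial, if_neg hji]
  · intro hi
    rw [coeff_monomial, if_pos rfl, coeff_eq_zero_of_natDegree_lt (by simpa using hi), zero_mul]

lemma natDegree_laplace_le (p : R[X]) : (laplace p).natDegree ≤ p.natDegree :=
  natDegree_le_iff_coeff_eq_zero.2 fun _ hN => by
    rw [coeff_laplace, coeff_eq_zero_of_natDegree_lt hN, zero_mul]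

lemma laplace_ne_zero [NoZeroDivisors R] [CharZero R] {p : R[X]} (hp : p ≠ 0) :
    laplace p ≠ 0 := by
  intro h
  have := congrArg (coeff · p.natDegree) h
  simp only [coeff_laplace, coeff_zero, mul_eq_zero, Nat.cast_eq_zero] at this
  exact this.elim (leadingCoeff_ne_zero.2 hp) (Nat.factorial_ne_zero _)

lemma map_laplace {S : Type*} [Semiring S] (f : R →+* S) (p : R[X]) :
    (laplace p).map f = laplace (p.map f) := by
  ext i
  simp

end Semiring

section CommSemiring

variable {R : Type*} [CommSemiring R]

noncomputable def laplaceShift (f : R[X]) : R[X] :=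
  X * derivative (X * f)

lemma laplace_X_mul (p : R[X]) : laplace (X * p) = laplaceShift (laplace p) := by
  ext i
  cases i with
  | zero => simp [laplaceShift]
  | succ i =>
    simp only [laplaceShift, coeff_laplace, coeff_X_mul, coeff_derivative, Nat.factorial_succ]
    push_cast
    ring

lemma laplace_X_pow_mul (l : ℕ) (p : R[X]) :
    laplace (X ^ l * p) = laplaceShift^[l] (laplace p) := by
  induction l with
  | zero => simp
  | succ l ih => rw [pow_succ', mul_assoc, laplace_X_mul, ih, Function.iterate_succ_apply']

end CommSemiring

section Domain

variable {R : Type*} [CommRing R] [IsDomain R] [CharZero R]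

lemma rootMultiplicity_laplaceShift {f : R[X]} {ρ : R} (hρ : ρ ≠ 0) (hf : f.IsRoot ρ) :
    rootMultiplicity ρ (laplaceShift f) = rootMultiplicity ρ f - 1 := by
  rcases eq_or_ne f 0 with rfl | hf0
  · simp [laplaceShift]
  have hXρ : ¬ (X : R[X]).IsRoot ρ := by simpa using hρ
  have hXf : X * f ≠ 0 := mul_ne_zero X_ne_zero hf0
  have hD : derivative (X * f) ≠ 0 := by
    rw [Ne, derivative_eq_zero, natDegree_mul X_ne_zero hf0, natDegree_X]
    omega
  rw [laplaceShift, rootMultiplicity_mul (mul_ne_zero X_ne_zero hD),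
    rootMultiplicity_eq_zero hXρ, zero_add,
    derivative_rootMultiplicity_of_root (by simp [hf.eq_zero]),
    rootMultiplicity_mul hXf, rootMultiplicity_eq_zero hXρ, zero_add]

lemma succ_le_rootMultiplicity_of_isRoot_laplaceShift_iterate {ρ : R} (hρ : ρ ≠ 0) (N : ℕ)
    {f : R[X]} (hN : laplaceShift^[N] f ≠ 0)
    (hroot : ∀ l ≤ N, (laplaceShift^[l] f).IsRoot ρ) : N + 1 ≤ rootMultiplicity ρ f := by
  induction N generalizing f with
  | zero => exact (rootMultiplicity_pos hN).2 (hroot 0 le_rfl)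
  | succ N ih =>
    have hf : f.IsRoot ρ := hroot 0 N.succ.zero_le
    have := ih (f := laplaceShift f) hN fun l hl => hroot (l + 1) (by omega)
    rw [rootMultiplicity_laplaceShift hρ hf] at this
    omega

end Domain

section Field

variable {F : Type*} [Field F] [CharZero F]

lemma lt_natDegree_of_dvd_laplace {ψ p : F[X]} (hψ0 : ψ.coeff 0 ≠ 0) (hψ : 0 < ψ.natDegree)
    (hp : p ≠ 0) {N : ℕ} (hdvd : ∀ l ≤ N, ψ ∣ laplace (X ^ l * p)) : N < p.natDegree := by
  let emb := algebraMap F (AlgebraicClosure F)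
  obtain ⟨ρ, hρ⟩ := IsAlgClosed.exists_root (ψ.map emb) (by
    rw [degree_map, degree_eq_natDegree (ne_zero_of_natDegree_gt hψ)]
    exact_mod_cast hψ.ne')
  have hρ0 : ρ ≠ 0 := by
    rintro rfl
    rw [IsRoot, ← coeff_zero_eq_eval_zero, coeff_map, map_eq_zero] at hρ
    exact hψ0 hρ
  have hiter (l : ℕ) :
      laplaceShift^[l] (laplace (p.map emb)) = (laplace (X ^ l * p)).map emb := by
    rw [← laplace_X_pow_mul, map_laplace, Polynomial.map_mul, Polynomial.map_pow, map_X]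
  have hmult := succ_le_rootMultiplicity_of_isRoot_laplaceShift_iterate hρ0 N
    (by rw [hiter, Ne, Polynomial.map_eq_zero_iff emb.injective]
        exact laplace_ne_zero (mul_ne_zero (pow_ne_zero _ X_ne_zero) hp))
    fun l hl => by rw [hiter]; exact hρ.dvd (map_dvd emb (hdvd l hl))
  have hdeg := natDegree_le_of_dvd (pow_rootMultiplicity_dvd (laplace (p.map emb)) ρ)
    (laplace_ne_zero ((Polynomial.map_ne_zero_iff emb.injective).2 hp))
  rw [natDegree_pow, natDegree_X_sub_C, mul_one] at hdeg
  have := natDegree_laplace_le (p.map emb)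
  rw [natDegree_map] at this
  omega

lemma lt_natDegree_of_laplace_mem {I : Ideal F[X]} (hI : I ≠ ⊤) (hsat : ∀ f, X * f ∈ I → f ∈ I)
    {p : F[X]} (hp : p ≠ 0) {N : ℕ} (hmem : ∀ l ≤ N, laplace (X ^ l * p) ∈ I) :
    N < p.natDegree := by
  obtain ⟨ψ, rfl⟩ := (IsPrincipalIdealRing.principal I).principal
  simp only [Ideal.submodule_span_eq, Ideal.mem_span_singleton, Ne,
    Ideal.span_singleton_eq_top] at hI hsat hmem
  have hψ : ψ ≠ 0 := by
    rintro rfl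
    exact laplace_ne_zero (mul_ne_zero (pow_ne_zero 0 X_ne_zero) hp)
      (zero_dvd_iff.1 (hmem 0 N.zero_le))
  have hψdeg : 0 < ψ.natDegree := by
    by_contra h
    exact hI (isUnit_iff_degree_eq_zero.2 (by rw [degree_eq_natDegree hψ]; simpa using h))
  have hψ0 : ψ.coeff 0 ≠ 0 := by
    rw [Ne, ← X_dvd_iff]
    rintro ⟨g, rfl⟩
    have hg := right_ne_zero_of_mul hψ
    have := natDegree_le_of_dvd (hsat g dvd_rfl) hg
    rw [natDegree_mul X_ne_zero hg, natDegree_X] at this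
    omega
  exact lt_natDegree_of_dvd_laplace hψ0 hψdeg hp hmem

end Field

end Polynomial

section Vandermonde

variable {ι F : Type*} [Fintype ι] [DecidableEq F] [Field F]

lemma linearIndependent_pow_fin_card_image (c : ι → F) :
    LinearIndependent F (fun k : Fin #(univ.image c) => c ^ (k : ℕ)) := by
  rw [Fintype.linearIndependent_iff]
  intro g hg
  let γ : Fin #(univ.image c) → F := fun j => (univ.image c).equivFin.symm j
  have hγ : Function.Injective γ := Subtype.val_injective.comp (Equiv.injective _)
  refine congrFun (eq_zero_of_forall_index_sum_mul_pow_eq_zero hγ fun j => ?_)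
  obtain ⟨i, -, hi⟩ := mem_image.1 ((univ.image c).equivFin.symm j).2
  simpa [γ, ← hi] using congrFun hg i

lemma card_image_le_finrank_of_pow_mem {c : ι → F} {K : Submodule F (ι → F)}
    (hK : ∀ k < #(univ.image c), c ^ k ∈ K) : #(univ.image c) ≤ Module.finrank F K := by
  let V := Submodule.span F (Set.range fun k : Fin #(univ.image c) => c ^ (k : ℕ))
  calc #(univ.image c) = Module.finrank F V := by
        rw [finrank_span_eq_card (linearIndependent_pow_fin_card_image c), Fintype.card_fin]
    _ ≤ Module.finrank F K :=
        Submodule.finrank_mono (Submodule.span_le.2 (Set.range_subset_iff.2 fun k => hK k k.isLt))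

end Vandermonde

namespace Matrix

section Invariant

variable {ι R : Type*} [Fintype ι] [DecidableEq ι] [CommRing R] (B : Matrix ι ι R)
  {K : Submodule R (ι → R)}

lemma pow_mulVec_mem (hK : ∀ v ∈ K, B *ᵥ v ∈ K) (j : ℕ) {v : ι → R} (hv : v ∈ K) :
    B ^ j *ᵥ v ∈ K := by
  induction j with
  | zero => simpa using hv
  | succ j ih => rw [pow_succ', ← mulVec_mulVec]; exact hK _ ih

lemma aeval_mulVec_mem (hK : ∀ v ∈ K, B *ᵥ v ∈ K) (f : R[X]) {v : ι → R} (hv : v ∈ K) :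
    aeval B f *ᵥ v ∈ K := by
  rw [aeval_eq_sum_range, sum_mulVec]
  exact K.sum_mem fun j _ => by
    rw [smul_mulVec]
    exact K.smul_mem _ (pow_mulVec_mem B hK j hv)

lemma pow_mulVec_mem_of_forall_lt_card [Nontrivial R] {v : ι → R}
    (hv : ∀ i < Fintype.card ι, B ^ i *ᵥ v ∈ K) (j : ℕ) : B ^ j *ᵥ v ∈ K := by
  rcases isEmpty_or_nonempty ι with hι | hι
  · rw [Subsingleton.elim (B ^ j *ᵥ v) 0]
    exact K.zero_mem
  have hdeg : (X ^ j %ₘ B.charpoly).natDegree < Fintype.card ι := by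
    refine (natDegree_modByMonic_lt _ B.charpoly_monic fun h => ?_).trans_eq
      (charpoly_natDegree_eq_dim B)
    simpa [h, eq_comm] using charpoly_natDegree_eq_dim B
  rw [pow_eq_aeval_mod_charpoly, aeval_eq_sum_range' hdeg, sum_mulVec]
  exact K.sum_mem fun i hi => by
    rw [smul_mulVec]
    exact K.smul_mem _ (hv i (mem_range.1 hi))

/-- The `B`-conductor of `v` into `K`, in the terminology of Hoffman–Kunze. -/
noncomputable def conductor (hK : ∀ v ∈ K, B *ᵥ v ∈ K) (v : ι → R) : Ideal R[X] where
  carrier := {f | aeval B f *ᵥ v ∈ K}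
  add_mem' {f g} hf hg := by
    simp only [Set.mem_ofPred_eq, map_add, add_mulVec] at *
    exact K.add_mem hf hg
  zero_mem' := by simp
  smul_mem' g f hf := by
    simp only [Set.mem_ofPred_eq, smul_eq_mul, map_mul, ← mulVec_mulVec] at *
    exact aeval_mulVec_mem B hK g hf

lemma mem_conductor (hK : ∀ v ∈ K, B *ᵥ v ∈ K) {v : ι → R} {f : R[X]} :
    f ∈ conductor B hK v ↔ aeval B f *ᵥ v ∈ K :=
  Iff.rfl

end Invariant

variable {ι F : Type*} [Fintype ι] [DecidableEq ι] [Field F] (B : Matrix ι ι F)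
  {K : Submodule F (ι → F)}

lemma mem_of_mulVec_mem (hK : ∀ v ∈ K, B *ᵥ v ∈ K) (hB : IsUnit B) {w : ι → F}
    (hw : B *ᵥ w ∈ K) : w ∈ K := by
  have hinj : Function.Injective B.mulVec := mulVec_injective_iff_isUnit.2 hB
  let f : K →ₗ[F] K := (mulVecLin B).restrict hK
  have hf : Function.Surjective f :=
    LinearMap.injective_iff_surjective.1 fun x y hxy => Subtype.ext (hinj congr($hxy.1))
  obtain ⟨u, hu⟩ := hf ⟨B *ᵥ w, hw⟩
  rw [← hinj congr($hu.1)]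
  exact u.2

noncomputable def stageResidual (c : ι → F) (k : ℕ) : ι → F :=
  B *ᵥ c ^ (k - 1) - (k : F)⁻¹ • c ^ k

variable [CharZero F]

lemma pow_sub_factorial_smul_mem (hK : ∀ v ∈ K, B *ᵥ v ∈ K) {c : ι → F} {q : ℕ}
    (hres : ∀ k, 1 ≤ k → k ≤ q → stageResidual B c k ∈ K) {k : ℕ} (hk : k ≤ q) :
    c ^ k - (k ! : F) • (B ^ k *ᵥ 1) ∈ K := by
  induction k with
  | zero => simp
  | succ k ih =>
    have hstep : c ^ (k + 1) - ((k + 1)! : F) • (B ^ (k + 1) *ᵥ 1)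
        = ((k : F) + 1) • B *ᵥ (c ^ k - (k ! : F) • (B ^ k *ᵥ 1))
          - ((k : F) + 1) • stageResidual B c (k + 1) := by
      have hk1 : (k : F) + 1 ≠ 0 := by exact_mod_cast k.succ_ne_zero
      ext i
      simp only [stageResidual, pow_succ' B, ← mulVec_mulVec, mulVec_sub, mulVec_smul,
        Pi.sub_apply, Pi.smul_apply, smul_eq_mul, Nat.factorial_succ, Nat.add_sub_cancel]
      push_cast
      field_simp
      ring
    rw [hstep]
    exact K.sub_mem (K.smul_mem _ (hK _ (ih (by omega)))) (K.smul_mem _ (hres _ (by omega) hk))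

lemma laplace_mem_conductor (hK : ∀ v ∈ K, B *ᵥ v ∈ K) {c : ι → F} {q : ℕ}
    (hres : ∀ k, 1 ≤ k → k ≤ q → stageResidual B c k ∈ K) {p : F[X]} (hdeg : p.natDegree ≤ q)
    (hroot : ∀ i, p.eval (c i) = 0) : laplace p ∈ conductor B hK 1 := by
  have hsum : ∑ j ∈ range (p.natDegree + 1), p.coeff j • c ^ j = 0 :=
    funext fun i => by simpa [eval_eq_sum_range] using hroot i
  have haeval : aeval B (laplace p) *ᵥ 1
      = -∑ j ∈ range (p.natDegree + 1), p.coeff j • (c ^ j - (j ! : F) • (B ^ j *ᵥ 1)) := by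
    simp only [smul_sub, sum_sub_distrib, hsum, zero_sub, neg_neg, laplace, map_sum,
      aeval_monomial, sum_mulVec, smul_smul, ← Algebra.smul_def, smul_mulVec]
  rw [mem_conductor, haeval]
  exact K.neg_mem (K.sum_mem fun j hj => K.smul_mem _
    (pow_sub_factorial_smul_mem B hK hres ((Nat.lt_succ_iff.1 (mem_range.1 hj)).trans hdeg)))

lemma one_mem_of_two_mul_card_image_le [DecidableEq F] (hK : ∀ v ∈ K, B *ᵥ v ∈ K)
    (hB : IsUnit B) {c : ι → F} {q : ℕ} (hres : ∀ k, 1 ≤ k → k ≤ q → stageResidual B c k ∈ K)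
    (hq : 2 * #(univ.image c) ≤ q) : (1 : ι → F) ∈ K := by
  by_contra hone
  set p₀ : F[X] := ∏ γ ∈ univ.image c, (X - C γ)
  have hp₀ : p₀ ≠ 0 := (monic_prod_of_monic _ _ fun γ _ => monic_X_sub_C γ).ne_zero
  have hdeg : p₀.natDegree = #(univ.image c) := natDegree_finsetProd_X_sub_C_eq_card _ _
  have hlt := lt_natDegree_of_laplace_mem (I := conductor B hK 1) (N := q - #(univ.image c))
    (by rwa [Ne, Ideal.eq_top_iff_one, mem_conductor, map_one, one_mulVec])
    (fun f hf => by
      rw [mem_conductor, map_mul, aeval_X, ← mulVec_mulVec] at hf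
      exact mem_of_mulVec_mem B hK hB hf)
    hp₀ (fun l hl => laplace_mem_conductor B hK hres
      (by rw [natDegree_mul (pow_ne_zero _ X_ne_zero) hp₀, natDegree_X_pow, hdeg]; omega)
      (fun i => by
        rw [eval_mul, eval_prod, prod_eq_zero (mem_image_of_mem c (mem_univ i)) (by simp),
          mul_zero]))
  omega

theorem card_image_le_finrank_of_stageResidual_mem [DecidableEq F] (hK : ∀ v ∈ K, B *ᵥ v ∈ K)
    (hB : IsUnit B) {c : ι → F} {q : ℕ} (hres : ∀ k, 1 ≤ k → k ≤ q → stageResidual B c k ∈ K)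
    (hq : 2 * #(univ.image c) ≤ q) : #(univ.image c) ≤ Module.finrank F K := by
  have hone := one_mem_of_two_mul_card_image_le B hK hB hres hq
  refine card_image_le_finrank_of_pow_mem fun k hk => ?_
  have hκ := pow_sub_factorial_smul_mem B hK hres (k := k) (by omega)
  simpa using K.add_mem hκ (K.smul_mem (k ! : F) (pow_mulVec_mem B hK k hone))

end Matrix

lemma card_image_le_card_image_comp_castSucc_add_one {α : Type*} [DecidableEq α] {s : ℕ}
    (c : Fin (s + 1) → α) : #(univ.image c) ≤ #(univ.image (c ∘ Fin.castSucc)) + 1 := by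
  calc #(univ.image c) ≤ #(insert (c (Fin.last s)) (univ.image (c ∘ Fin.castSucc))) := by
        refine card_le_card fun x hx => ?_
        obtain ⟨i, -, rfl⟩ := mem_image.1 hx
        induction i using Fin.lastCases <;> simp
    _ ≤ #(univ.image (c ∘ Fin.castSucc)) + 1 := card_insert_le _ _

lemma exists_card_image_comp_castLE_eq {α : Type*} [DecidableEq α] {s : ℕ} (c : Fin s → α)
    {m : ℕ} (hm : m ≤ #(univ.image c)) :
    ∃ t, ∃ h : t ≤ s, #(univ.image (c ∘ Fin.castLE h)) = m := by
  induction s with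
  | zero => exact ⟨0, le_rfl, by simp_all⟩
  | succ s ih =>
    by_cases hm' : m ≤ #(univ.image (c ∘ Fin.castSucc))
    · obtain ⟨t, h, ht⟩ := ih _ hm'
      exact ⟨t, h.trans s.le_succ, ht⟩
    · have := card_image_le_card_image_comp_castSucc_add_one c
      exact ⟨s + 1, le_rfl, by simp only [Fin.castLE_rfl, Function.comp_id]; omega⟩

namespace Matrix.IsLowerTriangular

variable {R : Type*} [CommRing R] {s t : ℕ} {A : Matrix (Fin s) (Fin s) R}

lemma mulVec_comp_castLE (hA : A.IsLowerTriangular) (h : t ≤ s) (w : Fin s → R) :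
    (A *ᵥ w) ∘ Fin.castLE h = A.submatrix (Fin.castLE h) (Fin.castLE h) *ᵥ (w ∘ Fin.castLE h) := by
  funext a
  refine (Fintype.sum_of_injective (Fin.castLE h) (Fin.castLE_injective h) _ _ (fun j hj => ?_)
    fun _ => rfl).symm
  have hlt : Fin.castLE h a < j := by
    by_contra hle
    exact hj ⟨⟨j, by simp only [not_lt, Fin.le_def, Fin.val_castLE] at hle; omega⟩, rfl⟩
  exact mul_eq_zero_of_left (hA hlt) _

lemma submatrix_castLE (hA : A.IsLowerTriangular) (h : t ≤ s) :
    (A.submatrix (Fin.castLE h) (Fin.castLE h)).IsLowerTriangular :=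
  fun _ _ hij => hA hij

lemma det_submatrix_castLE_ne_zero [IsDomain R] (hA : A.IsLowerTriangular) (hdet : A.det ≠ 0)
    (h : t ≤ s) : (A.submatrix (Fin.castLE h) (Fin.castLE h)).det ≠ 0 := by
  rw [det_of_isLowerTriangular A hA, prod_ne_zero_iff] at hdet
  rw [det_of_isLowerTriangular _ (hA.submatrix_castLE h), prod_ne_zero_iff]
  exact fun a _ => hdet _ (mem_univ _)

theorem card_image_comp_castLE_le_finrank {F : Type*} [Field F] [CharZero F] [DecidableEq F]
    {A : Matrix (Fin s) (Fin s) F} (hA : A.IsLowerTriangular) (hdet : A.det ≠ 0)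
    {K : Submodule F (Fin s → F)} (hK : ∀ v ∈ K, A *ᵥ v ∈ K) {c : Fin s → F} {q : ℕ}
    (hres : ∀ k, 1 ≤ k → k ≤ q → stageResidual A c k ∈ K) (h : t ≤ s)
    (hq : 2 * #(univ.image (c ∘ Fin.castLE h)) ≤ q) :
    #(univ.image (c ∘ Fin.castLE h)) ≤ Module.finrank F K := by
  set T := LinearMap.funLeft F F (Fin.castLE h)
  set B := A.submatrix (Fin.castLE h) (Fin.castLE h)
  have hT : ∀ w, T (A *ᵥ w) = B *ᵥ T w := hA.mulVec_comp_castLE h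
  calc #(univ.image (c ∘ Fin.castLE h)) ≤ Module.finrank F (K.map T) :=
        card_image_le_finrank_of_stageResidual_mem B
          (by rintro _ ⟨w, hw, rfl⟩; exact ⟨A *ᵥ w, hK w hw, hT w⟩)
          ((isUnit_iff_isUnit_det B).2 (hA.det_submatrix_castLE_ne_zero hdet h).isUnit)
          (fun k hk1 hkq =>
            ⟨_, hres k hk1 hkq, by rw [stageResidual, map_sub, map_smul, hT]; rfl⟩)
          hq
    _ ≤ Module.finrank F K := Submodule.finrank_map_le T K

end Matrix.IsLowerTriangular

theorem stmt7_general {s : ℕ} (A : Matrix (Fin s) (Fin s) ℝ)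
    (hlow : ∀ i j : Fin s, i < j → A i j = 0)
    (hdet : A.det ≠ 0)
    (c : Fin s → ℝ)
    (nc : ℕ) (hnc : nc = (Finset.image c Finset.univ).card)
    (q : ℕ) (hq : q ≤ 2 * nc - 1)
    (τ : ℕ → Fin s → ℝ)
    (hτ : ∀ k, τ k = A.mulVec (fun i => c i ^ (k - 1)) - (k : ℝ)⁻¹ • fun i => c i ^ k)
    (Kq : Submodule ℝ (Fin s → ℝ))
    (hKq : Kq = Submodule.span ℝ
      {x | ∃ j, j < s ∧ ∃ k, 1 ≤ k ∧ k ≤ q ∧ x = (A ^ j).mulVec (τ k)}) :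
    q / 2 ≤ Module.finrank ℝ Kq := by
  have hgen (j k : ℕ) (hk1 : 1 ≤ k) (hkq : k ≤ q) : A ^ j *ᵥ τ k ∈ Kq :=
    pow_mulVec_mem_of_forall_lt_card A (fun i hi => hKq ▸ Submodule.subset_span
      ⟨i, by simpa using hi, k, hk1, hkq, rfl⟩) j
  have hinv : ∀ v ∈ Kq, A *ᵥ v ∈ Kq := by
    suffices Kq ≤ Kq.comap A.mulVecLin from fun v hv => this hv
    conv_lhs => rw [hKq]
    refine Submodule.span_le.2 ?_
    rintro _ ⟨j, -, k, hk1, hkq, rfl⟩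
    simpa [mulVec_mulVec, ← pow_succ'] using hgen (j + 1) k hk1 hkq
  have hres (k : ℕ) (hk1 : 1 ≤ k) (hkq : k ≤ q) : stageResidual A c k ∈ Kq := by
    have := hgen 0 k hk1 hkq
    rwa [pow_zero, one_mulVec, hτ] at this
  obtain ⟨t, h, ht⟩ := exists_card_image_comp_castLE_eq c (m := q / 2) (by omega)
  calc q / 2 = #(univ.image (c ∘ Fin.castLE h)) := ht.symm
    _ ≤ Module.finrank ℝ Kq :=
      IsLowerTriangular.card_image_comp_castLE_le_finrank (fun i j hij => hlow i j hij) hdet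
        hinv hres h (by omega)

/-- Lower bound of the stage-count theorem: for an `s`-stage DIRK scheme with
invertible lower-triangular `A`, `c = A e`, `bᵀ e = 1`, having `n_c` distinct
abscissas, weak stage order ≥ `q`, and `q ≤ 2 n_c − 1`, one has `dim K_q ≥ ⌊q/2⌋`. -/
theorem stmt7 {s : ℕ} (A : Matrix (Fin s) (Fin s) ℝ) (b : Fin s → ℝ)
    (hlow : ∀ i j : Fin s, i < j → A i j = 0)
    (hdet : A.det ≠ 0)
    (c : Fin s → ℝ) (hc : c = A.mulVec fun _ => 1)
    (hb : (b ⬝ᵥ fun _ => 1) = 1)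
    (nc : ℕ) (hnc : nc = (Finset.image c Finset.univ).card)
    (q : ℕ) (hq : q ≤ 2 * nc - 1)
    (τ : ℕ → Fin s → ℝ)
    (hτ : ∀ k, τ k = A.mulVec (fun i => c i ^ (k - 1)) - (k : ℝ)⁻¹ • fun i => c i ^ k)
    (hwso : ∀ j, j < s → ∀ k, 1 ≤ k → k ≤ q → b ⬝ᵥ (A ^ j).mulVec (τ k) = 0)
    (Kq : Submodule ℝ (Fin s → ℝ))
    (hKq : Kq = Submodule.span ℝ
      {x | ∃ j, j < s ∧ ∃ k, 1 ≤ k ∧ k ≤ q ∧ x = (A ^ j).mulVec (τ k)}) :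
    q / 2 ≤ Module.finrank ℝ Kq :=
  stmt7_general A hlow hdet c nc hnc q hq τ hτ Kq hKq
end

section
/- (Reducibility of confluent leading blocks.) Let (A, b) be an s-stage DIRK scheme (A lower triangular, c = A e) whose first r abscissas coincide: c₁ = … = c_r, with 2 ≤ r ≤ s. Define the reduced (s − r + 1)-stage scheme (A*, b*) by: a*₁₁ = a₁₁; for i ≥ 2, a*_{i1} = Σ_{j=1}^{r} a_{r+i−1, j} and a*_{ij} = a_{r+i−1, r+j−1} for j ≥ 2; b*₁ = Σ_{j=1}^{r} b_j and b*_i = b_{r+i−1} for i ≥ 2. Then for every m ≥ 1, every f : ℝ × ℝ^m → ℝ^m, every t_n ∈ ℝ, Δt ∈ ℝ, and u_n ∈ ℝ^m: (i) if g* = (g*₁, …, g*_{s−r+1}) satisfies the stage equations g*_i = u_n + Δt Σ_j a*_{ij} f(t_n + c*_j Δt, g*_j) of the reduced scheme, then the padded vector g with g₁ = … = g_r = g*₁ and g_{r+i−1} = g*_i (i ≥ 2) satisfies the stage equations of (A, b), and the step updates agree: u_n + Δt Σ_j b_j f(t_n + c_j Δt, g_j) = u_n + Δt Σ_j b*_j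 f(t_n + c*_j Δt, g*_j); (ii) conversely, if g satisfies the stage equations of (A, b) and g₁ = … = g_r, then the reduced vector (g₁, g_{r+1}, …, g_s) satisfies the stage equations of (A*, b*) with the same step update. -/
/-!
Let `π` send stages `0, …, r-1` to reduced stage `0` and stage `r-1+i` to reduced stage `i`.
Lumping weights along `π`, `w' k = ∑_{π j = k} w j`, gives
`∑ j, w j • F (π j) = ∑ k, w' k • F k`. Hence if every row `A i` lumps to `A' (π i)` and `b`
lumps to `b'`, then `c = c' ∘ π`, and the stage equations and the update of `(A, b)` at
`g' ∘ π` are those of `(A', b')` at `g'`. Rows `i ≥ r` lump correctly by construction of `A'`.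
A row `i < r` has, by lower triangularity, all its mass in the first `r` columns, so it lumps
to `(c i, 0, …, 0) = (c 0, 0, …, 0) = (a₀₀, 0, …, 0)`, the first row of `A'`.
-/

open Matrix Finset

section Lumping

variable {ι κ R M : Type*} [Fintype ι] [Fintype κ] [DecidableEq κ]

def fiberSum [AddCommMonoid M] (π : ι → κ) (w : ι → M) (k : κ) : M :=
  ∑ j ∈ univ.filter (fun j => π j = k), w j

variable [Semiring R] [AddCommMonoid M] [Module R M]

theorem sum_fiberSum_smul (π : ι → κ) (w : ι → R) (F : κ → M) :
    ∑ k, fiberSum π w k • F k = ∑ j, w j • F (π j) := by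
  simp only [fiberSum, Finset.sum_smul]
  rw [← Finset.sum_fiberwise univ π fun j => w j • F (π j)]
  refine Finset.sum_congr rfl fun k _ => Finset.sum_congr rfl fun j hj => ?_
  rw [(Finset.mem_filter.1 hj).2]

theorem mulVec_one_comp_of_fiberSum {π : ι → κ} {A : Matrix ι ι R} {A' : Matrix κ κ R}
    (hA : ∀ i, fiberSum π (A i) = A' (π i)) (i : ι) :
    (A' *ᵥ fun _ => 1) (π i) = (A *ᵥ fun _ => 1) i := by
  simpa [mulVec, dotProduct, hA] using sum_fiberSum_smul π (A i) fun _ => (1 : R)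

def rkCombination (w c : ι → R) (f : R → M → M) (t Δt : R) (u : M) (g : ι → M) : M :=
  u + Δt • ∑ j, w j • f (t + c j * Δt) (g j)

theorem rkCombination_comp {π : ι → κ} {w c : ι → R} {w' c' : κ → R}
    (hw : fiberSum π w = w') (hc : ∀ j, c' (π j) = c j)
    (f : R → M → M) (t Δt : R) (u : M) (g' : κ → M) :
    rkCombination w c f t Δt u (g' ∘ π) = rkCombination w' c' f t Δt u g' := by
  simp only [rkCombination, ← hw, sum_fiberSum_smul, Function.comp_apply, hc]

theorem stage_equations_comp_iff {π : ι → κ} (hπ : Function.Surjective π)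
    {A : Matrix ι ι R} {A' : Matrix κ κ R} (hA : ∀ i, fiberSum π (A i) = A' (π i))
    {c : ι → R} {c' : κ → R} (hc : ∀ j, c' (π j) = c j)
    (f : R → M → M) (t Δt : R) (u : M) (g' : κ → M) :
    (∀ i, (g' ∘ π) i = rkCombination (A i) c f t Δt u (g' ∘ π)) ↔
      ∀ k, g' k = rkCombination (A' k) c' f t Δt u g' := by
  simp only [rkCombination_comp (hA _) hc, Function.comp_apply]
  exact (hπ.forall (p := fun k => g' k = rkCombination (A' k) c' f t Δt u g')).symm

end Lumping

namespace ConfluentBlock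

variable {r s : ℕ}

def collapse (hrs : r ≤ s) (j : Fin s) : Fin (s - r + 1) :=
  if h : (j : ℕ) < r then 0 else ⟨j - r + 1, by have := j.isLt; omega⟩

def embed (hr : 0 < r) (hrs : r ≤ s) (k : Fin (s - r + 1)) : Fin s :=
  if (k : ℕ) = 0 then ⟨0, by omega⟩ else ⟨r - 1 + k, by omega⟩

theorem val_embed_of_ne_zero (hr : 0 < r) (hrs : r ≤ s) {k : Fin (s - r + 1)}
    (hk : (k : ℕ) ≠ 0) : (embed hr hrs k : ℕ) = r - 1 + k := by
  simp [embed, hk]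

theorem collapse_eq_zero_iff (hrs : r ≤ s) (j : Fin s) :
    collapse hrs j = 0 ↔ (j : ℕ) < r := by
  unfold collapse
  split_ifs with h
  · simp [h]
  · simp [h, Fin.ext_iff]

theorem collapse_eq_iff_eq_embed (hr : 0 < r) (hrs : r ≤ s) {k : Fin (s - r + 1)}
    (hk : (k : ℕ) ≠ 0) (j : Fin s) : collapse hrs j = k ↔ j = embed hr hrs k := by
  unfold collapse embed
  split_ifs <;> simp only [Fin.ext_iff, Fin.val_zero] <;> omega

theorem collapse_embed (hr : 0 < r) (hrs : r ≤ s) (k : Fin (s - r + 1)) :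
    collapse hrs (embed hr hrs k) = k := by
  by_cases hk : (k : ℕ) = 0
  · obtain rfl : k = 0 := Fin.ext hk
    exact (collapse_eq_zero_iff hrs _).2 (by simpa [embed])
  · exact (collapse_eq_iff_eq_embed hr hrs hk _).2 rfl

theorem collapse_surjective (hr : 0 < r) (hrs : r ≤ s) : Function.Surjective (collapse hrs) :=
  Function.LeftInverse.surjective (collapse_embed hr hrs)

theorem embed_collapse_of_le (hr : 0 < r) (hrs : r ≤ s) {j : Fin s} (hj : r ≤ (j : ℕ)) :
    embed hr hrs (collapse hrs j) = j := by
  have hne : (collapse hrs j : ℕ) ≠ 0 := by simp [collapse, Nat.not_lt.2 hj]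
  exact ((collapse_eq_iff_eq_embed hr hrs hne j).1 rfl).symm

theorem comp_embed_collapse (hr : 0 < r) (hrs : r ≤ s) {α : Type*} {g : Fin s → α}
    (hg : ∀ j : Fin s, (j : ℕ) < r → g j = g ⟨0, by omega⟩) :
    g ∘ embed hr hrs ∘ collapse hrs = g := by
  funext j
  by_cases hj : (j : ℕ) < r
  · simp [Function.comp_apply, (collapse_eq_zero_iff hrs j).2 hj, embed, hg j hj]
  · simp [Function.comp_apply, embed_collapse_of_le hr hrs (Nat.le_of_not_lt hj)]

theorem fiberSum_collapse_eq (hr : 0 < r) (hrs : r ≤ s) {M : Type*} [AddCommMonoid M]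
    {w : Fin s → M} {w' : Fin (s - r + 1) → M}
    (h0 : w' 0 = ∑ j ∈ univ.filter (fun j : Fin s => (j : ℕ) < r), w j)
    (hne : ∀ k : Fin (s - r + 1), (k : ℕ) ≠ 0 → w' k = w (embed hr hrs k)) :
    fiberSum (collapse hrs) w = w' := by
  funext k
  by_cases hk : (k : ℕ) = 0
  · obtain rfl : k = 0 := Fin.ext hk
    rw [h0, fiberSum, Finset.filter_congr fun j _ => collapse_eq_zero_iff hrs j]
  · rw [hne k hk, fiberSum, Finset.filter_congr fun j _ => collapse_eq_iff_eq_embed hr hrs hk j,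
      Finset.filter_eq', if_pos (mem_univ _), sum_singleton]

variable {R : Type*} [Semiring R] {A : Matrix (Fin s) (Fin s) R}

theorem sum_filter_lt_eq_mulVec_one (hlow : ∀ i j : Fin s, i < j → A i j = 0)
    {i : Fin s} (hi : (i : ℕ) < r) :
    ∑ j ∈ univ.filter (fun j : Fin s => (j : ℕ) < r), A i j = (A *ᵥ fun _ => 1) i := by
  simp only [mulVec, dotProduct, mul_one]
  refine Finset.sum_filter_of_ne fun j _ hj => ?_
  by_contra hjr
  exact hj (hlow i j (Fin.lt_def.2 (by omega)))

theorem mulVec_one_apply_first (hs : 0 < s) (hlow : ∀ i j : Fin s, i < j → A i j = 0) :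
    (A *ᵥ fun _ => 1) ⟨0, by omega⟩ = A ⟨0, by omega⟩ ⟨0, by omega⟩ := by
  simp only [mulVec, dotProduct, mul_one]
  refine Fintype.sum_eq_single _ fun j hj => hlow _ _ ?_
  exact Fin.lt_def.2 (Nat.pos_of_ne_zero fun h => hj (Fin.ext h))

theorem fiberSum_collapse_row (hr : 0 < r) (hrs : r ≤ s)
    (hlow : ∀ i j : Fin s, i < j → A i j = 0)
    (hconf : ∀ j : Fin s, (j : ℕ) < r →
      (A *ᵥ fun _ => 1) j = (A *ᵥ fun _ => 1) ⟨0, by omega⟩)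
    {A' : Matrix (Fin (s - r + 1)) (Fin (s - r + 1)) R}
    (hA'00 : A' 0 0 = A ⟨0, by omega⟩ ⟨0, by omega⟩)
    (hA'0j : ∀ j : Fin (s - r + 1), (j : ℕ) ≠ 0 → A' 0 j = 0)
    (hA'i0 : ∀ i : Fin (s - r + 1), (i : ℕ) ≠ 0 →
      A' i 0 = ∑ j ∈ univ.filter (fun j : Fin s => (j : ℕ) < r), A (embed hr hrs i) j)
    (hA'ij : ∀ i j : Fin (s - r + 1), (i : ℕ) ≠ 0 → (j : ℕ) ≠ 0 →
      A' i j = A (embed hr hrs i) (embed hr hrs j))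
    (i : Fin s) :
    fiberSum (collapse hrs) (A i) = A' (collapse hrs i) := by
  by_cases hi : (i : ℕ) < r
  · rw [(collapse_eq_zero_iff hrs i).2 hi]
    refine fiberSum_collapse_eq hr hrs ?_ fun k hk => ?_
    · rw [hA'00, sum_filter_lt_eq_mulVec_one hlow hi, hconf i hi,
        mulVec_one_apply_first (by omega) hlow]
    · refine (hA'0j k hk).trans (hlow _ _ ?_).symm
      rw [Fin.lt_def, val_embed_of_ne_zero hr hrs hk]
      omega
  · have he := embed_collapse_of_le hr hrs (Nat.le_of_not_lt hi)
    have hne : (collapse hrs i : ℕ) ≠ 0 := by simp [collapse, hi]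
    refine fiberSum_collapse_eq hr hrs ((hA'i0 _ hne).trans (by rw [he])) fun k hk => ?_
    exact (hA'ij _ k hne hk).trans (by rw [he])

end ConfluentBlock

open ConfluentBlock

/-- Reducibility of confluent leading blocks: if the first `r` abscissas of an `s`-stage
DIRK scheme coincide, then solutions of the stage equations of the reduced
`(s−r+1)`-stage scheme pad to solutions of the original stage equations with the same
step update (part (i)), and conversely (part (ii)). Indices are 0-based: original
stages `0,…,r−1` collapse to reduced stage `0`, and reduced stage `i ≥ 1` corresponds
to original stage `r−1+i`. -/
theorem stmt9 {s r : ℕ} (hr : 2 ≤ r) (hrs : r ≤ s)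
    (A : Matrix (Fin s) (Fin s) ℝ) (b : Fin s → ℝ)
    (hlow : ∀ i j : Fin s, i < j → A i j = 0)
    (c : Fin s → ℝ) (hc : c = A.mulVec fun _ => 1)
    (hconf : ∀ j : Fin s, (j : ℕ) < r → c j = c ⟨0, by omega⟩)
    (emb : Fin (s - r + 1) → Fin s)
    (hemb : ∀ i : Fin (s - r + 1),
      emb i = if (i : ℕ) = 0 then ⟨0, by omega⟩
        else ⟨r - 1 + (i : ℕ), by have := i.isLt; omega⟩)
    (A' : Matrix (Fin (s - r + 1)) (Fin (s - r + 1)) ℝ) (b' : Fin (s - r + 1) → ℝ)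
    (hA'00 : A' ⟨0, by omega⟩ ⟨0, by omega⟩ = A ⟨0, by omega⟩ ⟨0, by omega⟩)
    (hA'0j : ∀ j : Fin (s - r + 1), (j : ℕ) ≠ 0 → A' ⟨0, by omega⟩ j = 0)
    (hA'i0 : ∀ i : Fin (s - r + 1), (i : ℕ) ≠ 0 →
      A' i ⟨0, by omega⟩ =
        ∑ j ∈ Finset.univ.filter (fun j : Fin s => (j : ℕ) < r), A (emb i) j)
    (hA'ij : ∀ i j : Fin (s - r + 1), (i : ℕ) ≠ 0 → (j : ℕ) ≠ 0 →
      A' i j = A (emb i) (emb j))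
    (hb'0 : b' ⟨0, by omega⟩ = ∑ j ∈ Finset.univ.filter (fun j : Fin s => (j : ℕ) < r), b j)
    (hb'i : ∀ i : Fin (s - r + 1), (i : ℕ) ≠ 0 → b' i = b (emb i))
    (c' : Fin (s - r + 1) → ℝ) (hc' : c' = A'.mulVec fun _ => 1)
    {m : ℕ} (f : ℝ → (Fin m → ℝ) → (Fin m → ℝ))
    (tn Δt : ℝ) (un : Fin m → ℝ) :
    -- (i) padded solutions of the reduced scheme solve the original scheme
    (∀ g' : Fin (s - r + 1) → Fin m → ℝ,
      (∀ i, g' i = un + Δt • ∑ j, A' i j • f (tn + c' j * Δt) (g' j)) →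
      ∀ g : Fin s → Fin m → ℝ,
        (∀ j : Fin s, g j = if h : (j : ℕ) < r then g' ⟨0, by omega⟩
          else g' ⟨(j : ℕ) - r + 1, by have := j.isLt; omega⟩) →
        (∀ i, g i = un + Δt • ∑ j, A i j • f (tn + c j * Δt) (g j)) ∧
          un + Δt • ∑ j, b j • f (tn + c j * Δt) (g j) =
            un + Δt • ∑ j, b' j • f (tn + c' j * Δt) (g' j)) ∧
    -- (ii) solutions of the original scheme with coinciding first r stages reduce
    (∀ g : Fin s → Fin m → ℝ,
      (∀ i, g i = un + Δt • ∑ j, A i j • f (tn + c j * Δt) (g j)) →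
      (∀ j : Fin s, (j : ℕ) < r → g j = g ⟨0, by omega⟩) →
      ∀ g' : Fin (s - r + 1) → Fin m → ℝ,
        (∀ i, g' i = g (emb i)) →
        (∀ i, g' i = un + Δt • ∑ j, A' i j • f (tn + c' j * Δt) (g' j)) ∧
          un + Δt • ∑ j, b j • f (tn + c j * Δt) (g j) =
            un + Δt • ∑ j, b' j • f (tn + c' j * Δt) (g' j)) := by
  have hr' : 0 < r := by omega
  obtain rfl : emb = embed hr' hrs := funext hemb
  subst hc hc'
  have hA := fiberSum_collapse_row hr' hrs hlow hconf hA'00 hA'0j hA'i0 hA'ij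
  have hb : fiberSum (collapse hrs) b = b' := fiberSum_collapse_eq hr' hrs hb'0 hb'i
  have hcc := mulVec_one_comp_of_fiberSum hA
  have hstages := stage_equations_comp_iff (collapse_surjective hr' hrs) hA hcc f tn Δt un
  refine ⟨fun g' hg' g hg => ?_, fun g hg hg0 g' hg' => ?_⟩
  · obtain rfl : g = g' ∘ collapse hrs := funext fun j => (hg j).trans (apply_dite g' _ _ _).symm
    exact ⟨(hstages g').2 hg', rkCombination_comp hb hcc f tn Δt un g'⟩
  · obtain rfl : g = g' ∘ collapse hrs :=
      (comp_embed_collapse hr' hrs hg0).symm.trans (congrArg (· ∘ collapse hrs) (funext hg').symm)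
    exact ⟨(hstages _).1 hg, rkCombination_comp hb hcc f tn Δt un _⟩
end

section
/- (Redundancy of order conditions under weak stage order.) Let (A, b) be an s-stage RK scheme with c = A e having weak stage order at least q, i.e., b^T A^j τ^(k) = 0 for all j ≥ 0 and 1 ≤ k ≤ q. Then for every ℓ ≥ 1 and every 1 ≤ k ≤ min(ℓ, q), the order condition residuals φ_{ℓ,k} := b^T A^{ℓ−k} c^k − k!/(ℓ+1)! satisfy φ_{ℓ,k} = k · φ_{ℓ,k−1}, and hence φ_{ℓ,k} = k! · φ_{ℓ,0}. In particular, for a method of weak stage order q, all the conditions φ_{ℓ,k} = 0 with 0 ≤ k ≤ min(ℓ, q) are mutually equivalent. -/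
/-!
Unfolding `τ⁽ᵏ⁾ = A c^{k-1} - c^k / k` in the weak stage order condition `bᵀ A^{ℓ-k} τ⁽ᵏ⁾ = 0`
gives `bᵀ A^{ℓ-k} c^k = k · bᵀ A^{ℓ-k+1} c^{k-1}`; since also `k!/(ℓ+1)! = k · (k-1)!/(ℓ+1)!`,
the residuals obey `φ_{ℓ,k} = k · φ_{ℓ,k-1}`, and iterating down to `k = 0` gives the factorial.
-/

open Matrix

theorem dotProduct_pow_mulVec_eq_mul_succ {n K : Type*} [Fintype n] [DecidableEq n] [Field K]
    {A : Matrix n n K} {b u v : n → K} {r : K} {j : ℕ} (hr : r ≠ 0)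
    (h : b ⬝ᵥ (A ^ j) *ᵥ (A *ᵥ u - r⁻¹ • v) = 0) :
    b ⬝ᵥ (A ^ j) *ᵥ v = r * b ⬝ᵥ (A ^ (j + 1)) *ᵥ u := by
  rw [mulVec_sub, mulVec_smul, dotProduct_sub, dotProduct_smul, mulVec_mulVec, ← pow_succ,
    sub_eq_zero, smul_eq_mul] at h
  rw [h, mul_inv_cancel_left₀ hr]

theorem eq_factorial_mul_of_eq_mul_pred {R : Type*} [CommSemiring R] {f : ℕ → R} {m : ℕ}
    (h : ∀ k, 1 ≤ k → k ≤ m → f k = k * f (k - 1)) :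
    ∀ k ≤ m, f k = k.factorial * f 0
  | 0, _ => by simp
  | k + 1, hk => by
    rw [h (k + 1) k.succ_pos hk, Nat.add_sub_cancel, eq_factorial_mul_of_eq_mul_pred h k (by omega),
      Nat.factorial_succ]
    push_cast
    ring

theorem stmt12_general {s : ℕ} (A : Matrix (Fin s) (Fin s) ℝ) (b : Fin s → ℝ)
    (c : Fin s → ℝ)
    (q : ℕ)
    (τ : ℕ → Fin s → ℝ)
    (hτ : ∀ k, τ k = A.mulVec (fun i => c i ^ (k - 1)) - (k : ℝ)⁻¹ • fun i => c i ^ k)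
    (φ : ℕ → ℕ → ℝ)
    (hφ : ∀ ℓ k, φ ℓ k =
      b ⬝ᵥ (A ^ (ℓ - k)).mulVec (fun i => c i ^ k) -
        (Nat.factorial k : ℝ) / (Nat.factorial (ℓ + 1) : ℝ))
    (hwso : ∀ j : ℕ, ∀ k, 1 ≤ k → k ≤ q → b ⬝ᵥ (A ^ j).mulVec (τ k) = 0) :
    ∀ ℓ, 1 ≤ ℓ → ∀ k, 1 ≤ k → k ≤ min ℓ q →
      φ ℓ k = (k : ℝ) * φ ℓ (k - 1) ∧ φ ℓ k = (Nat.factorial k : ℝ) * φ ℓ 0 ∧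
        (φ ℓ k = 0 ↔ φ ℓ 0 = 0) := by
  intro ℓ _ k hk hkm
  have step : ∀ k, 1 ≤ k → k ≤ min ℓ q → φ ℓ k = (k : ℝ) * φ ℓ (k - 1) := by
    intro k hk hkm
    have hk0 : k ≠ 0 := by omega
    have key := dotProduct_pow_mulVec_eq_mul_succ (Nat.cast_ne_zero.mpr hk0)
      (hτ k ▸ hwso (ℓ - k) k hk (hkm.trans (min_le_right ℓ q)))
    rw [hφ, hφ, key, show ℓ - (k - 1) = ℓ - k + 1 by omega, ← Nat.mul_factorial_pred hk0]
    push_cast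
    ring
  have hfac := eq_factorial_mul_of_eq_mul_pred step k hkm
  exact ⟨step k hk hkm, hfac, by rw [hfac, mul_eq_zero_iff_left (by positivity)]⟩

/-- Redundancy of order conditions under weak stage order: if `bᵀ Aʲ τ⁽ᵏ⁾ = 0` for all
`j ≥ 0` and `1 ≤ k ≤ q`, then for every `ℓ ≥ 1` and `1 ≤ k ≤ min(ℓ,q)` the order
condition residuals satisfy `φ_{ℓ,k} = k · φ_{ℓ,k−1}`, hence `φ_{ℓ,k} = k! · φ_{ℓ,0}`;
all conditions `φ_{ℓ,k} = 0`, `0 ≤ k ≤ min(ℓ,q)`, are mutually equivalent. -/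
theorem stmt12 {s : ℕ} (A : Matrix (Fin s) (Fin s) ℝ) (b : Fin s → ℝ)
    (c : Fin s → ℝ) (hc : c = A.mulVec fun _ => 1)
    (q : ℕ) (hq : 1 ≤ q)
    (τ : ℕ → Fin s → ℝ)
    (hτ : ∀ k, τ k = A.mulVec (fun i => c i ^ (k - 1)) - (k : ℝ)⁻¹ • fun i => c i ^ k)
    (φ : ℕ → ℕ → ℝ)
    (hφ : ∀ ℓ k, φ ℓ k =
      b ⬝ᵥ (A ^ (ℓ - k)).mulVec (fun i => c i ^ k) -
        (Nat.factorial k : ℝ) / (Nat.factorial (ℓ + 1) : ℝ))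
    (hwso : ∀ j : ℕ, ∀ k, 1 ≤ k → k ≤ q → b ⬝ᵥ (A ^ j).mulVec (τ k) = 0) :
    ∀ ℓ, 1 ≤ ℓ → ∀ k, 1 ≤ k → k ≤ min ℓ q →
      φ ℓ k = (k : ℝ) * φ ℓ (k - 1) ∧ φ ℓ k = (Nat.factorial k : ℝ) * φ ℓ 0 ∧
        (φ ℓ k = 0 ↔ φ ℓ 0 = 0) :=
  stmt12_general A b c q τ hτ φ hφ hwso
end

section
/- (Error recursion for the Prothero–Robinson problem.) Let (A, b) be an s-stage RK scheme with c = A e, let φ : ℝ → ℝ be differentiable, let λ ∈ ℝ, Δt ∈ ℝ, t_n ∈ ℝ, and set ζ = λ Δt; assume I − ζA is invertible. Suppose g ∈ ℝ^s and u_{n+1} ∈ ℝ satisfy the RK equations for the Prothero–Robinson right-hand side f(t,u) = λ(u − φ(t)) + φ'(t): g_i = u_n + Δt Σ_j a_{ij} f(t_n + c_j Δt, g_j) and u_{n+1} = u_n + Δt Σ_j b_j f(t_n + c_j Δt, g_j). Define the stage residuals E_i := φ(t_n + c_i Δt) − φ(t_n) − Δt Σ_j a_{ij} φ'(t_n + c_j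 Δt) and the step residual E_step := φ(t_n + Δt) − φ(t_n) − Δt Σ_j b_j φ'(t_n + c_j Δt). Then the errors ε_n := u_n − φ(t_n) and ε_{n+1} := u_{n+1} − φ(t_n + Δt) satisfy ε_{n+1} = R(ζ) ε_n − ζ b^T (I − ζ A)^{-1} E − E_step, where R(ζ) = 1 + ζ b^T (I − ζA)^{-1} e and E = (E₁, …, E_s)^T. -/
open Matrix

/-- Error recursion for the Prothero–Robinson problem
`u' = λ(u − φ(t)) + φ'(t)`: with stage residuals `E` and step residual `Estep`,
the errors `ε_n = u_n − φ(t_n)`, `ε_{n+1} = u_{n+1} − φ(t_n + Δt)` satisfy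
`ε_{n+1} = R(ζ) ε_n − ζ bᵀ (I − ζA)⁻¹ E − Estep`. -/
theorem stmt13 {s : ℕ} (A : Matrix (Fin s) (Fin s) ℝ) (b : Fin s → ℝ)
    (c : Fin s → ℝ) (hc : c = A.mulVec fun _ => 1)
    (φ : ℝ → ℝ) (hφ : Differentiable ℝ φ)
    (lam Δt tn : ℝ) (ζ : ℝ) (hζ : ζ = lam * Δt)
    (hinv : (1 - ζ • A).det ≠ 0)
    (un : ℝ) (g : Fin s → ℝ) (un1 : ℝ)
    (hg : ∀ i, g i = un + Δt * ∑ j, A i j *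
      (lam * (g j - φ (tn + c j * Δt)) + deriv φ (tn + c j * Δt)))
    (hu : un1 = un + Δt * ∑ j, b j *
      (lam * (g j - φ (tn + c j * Δt)) + deriv φ (tn + c j * Δt)))
    (E : Fin s → ℝ)
    (hE : ∀ i, E i = φ (tn + c i * Δt) - φ tn -
      Δt * ∑ j, A i j * deriv φ (tn + c j * Δt))
    (Estep : ℝ)
    (hEstep : Estep = φ (tn + Δt) - φ tn - Δt * ∑ j, b j * deriv φ (tn + c j * Δt))
    (R : ℝ) (hR : R = 1 + ζ * (b ⬝ᵥ (1 - ζ • A)⁻¹.mulVec fun _ => 1)) :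
    un1 - φ (tn + Δt) =
      R * (un - φ tn) - ζ * (b ⬝ᵥ (1 - ζ • A)⁻¹.mulVec E) - Estep := by
  set M : Matrix (Fin s) (Fin s) ℝ := 1 - ζ • A with hM
  have hMunit : IsUnit M.det := isUnit_iff_ne_zero.mpr hinv
  set ε : Fin s → ℝ := fun i => g i - φ (tn + c i * Δt) with hε
  -- split sums
  have hsplit : ∀ i, (∑ j, A i j *
      (lam * (g j - φ (tn + c j * Δt)) + deriv φ (tn + c j * Δt)))
      = lam * (∑ j, A i j * ε j) + ∑ j, A i j * deriv φ (tn + c j * Δt) := by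
    intro i
    rw [Finset.mul_sum, ← Finset.sum_add_distrib]
    exact Finset.sum_congr rfl fun j _ => by simp [hε]; ring
  have hsplitb : (∑ j, b j *
      (lam * (g j - φ (tn + c j * Δt)) + deriv φ (tn + c j * Δt)))
      = lam * (∑ j, b j * ε j) + ∑ j, b j * deriv φ (tn + c j * Δt) := by
    rw [Finset.mul_sum, ← Finset.sum_add_distrib]
    exact Finset.sum_congr rfl fun j _ => by simp [hε]; ring
  have key : M.mulVec ε = (un - φ tn) • (fun _ => (1:ℝ)) - E := by
    funext i
    have hgi := hg i
    have hEi := hE i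
    simp only [hM, Matrix.sub_mulVec, Matrix.one_mulVec, Matrix.smul_mulVec,
      Pi.sub_apply, Pi.smul_apply, smul_eq_mul]
    have hAε : A.mulVec ε i = ∑ j, A i j * ε j := rfl
    rw [hAε]
    have : ε i = g i - φ (tn + c i * Δt) := rfl
    rw [this, hgi, hsplit i, hEi, hζ]
    ring
  have hεeq : ε = M⁻¹.mulVec ((un - φ tn) • (fun _ => (1:ℝ)) - E) := by
    have := congrArg M⁻¹.mulVec key
    rwa [Matrix.mulVec_mulVec, Matrix.nonsing_inv_mul _ hMunit, Matrix.one_mulVec] at this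
  have hdot : b ⬝ᵥ ε = (un - φ tn) * (b ⬝ᵥ M⁻¹.mulVec fun _ => (1:ℝ))
      - b ⬝ᵥ M⁻¹.mulVec E := by
    rw [hεeq, Matrix.mulVec_sub, Matrix.mulVec_smul, dotProduct_sub, dotProduct_smul,
      smul_eq_mul]
  have hbε : b ⬝ᵥ ε = ∑ j, b j * ε j := rfl
  rw [hu, hsplitb, hEstep, hR]
  rw [← hbε, hdot, hζ]
  ring
end

section
/- (Weak stage order removes order reduction exactly for polynomial Prothero–Robinson data.) Let (A, b) be an s-stage RK scheme with c = A e satisfying the quadrature conditions B(q): b^T c^{k−1} = 1/k for k = 1, …, q. Let λ ∈ ℝ, Δt ∈ ℝ, ζ = λΔt with I − ζA invertible, and suppose b^T (I − ζA)^{-1} τ^(k) = 0 for k = 1, …, q (which holds in particular if the scheme has weak stage order at least q). Let φ : ℝ → ℝ be a polynomial of degree at most q. If g ∈ ℝ^s and u_{n+1} ∈ ℝ satisfy the RK stage and update equations for the right-hand side f(t,u) = λ(u − φ(t)) + φ'(t) starting from u_n at time t_n, then u_{n+1} − φ(t_n + Δt) = R(ζ) (u_n − φ(t_n)). In particular, if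 u_n = φ(t_n) then u_{n+1} = φ(t_n + Δt): the scheme reproduces the exact solution with zero error for every step size and every stiffness λ. -/
/-!
Put `p(x) = φ(tₙ + x Δt)`, so that `p(0) = φ(tₙ)`, `p(1) = φ(tₙ + Δt)` and `p' = Δt φ'(tₙ + · Δt)`.
The stage errors `e = g − p(c)` solve `(I − ζA) e = (uₙ − φ(tₙ)) 𝟙 + δ` with the stage defect
`δ = A p'(c) − (p(c) − p(0) 𝟙)`, and the step error is
`uₙ₊₁ − p(1) = uₙ − p(0) + ζ bᵀe + (bᵀ p'(c) − (p(1) − p(0)))`.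
Both `bᵀ(I − ζA)⁻¹ δ` and the quadrature error `bᵀ p'(c) − (p(1) − p(0))` are linear in `p`, so they
vanish for `deg p ≤ q` as soon as they vanish on the monomials `Xᵏ`, `k ≤ q`; there they are
`k bᵀ(I − ζA)⁻¹ τ⁽ᵏ⁾` and `k bᵀcᵏ⁻¹ − 1`.
-/

open Matrix Polynomial

theorem Polynomial.linearMap_eq_zero_of_natDegree_le {R M : Type*} [CommSemiring R]
    [AddCommMonoid M] [Module R M] (L : R[X] →ₗ[R] M) {q : ℕ}
    (hL : ∀ k ≤ q, L (X ^ k) = 0) {p : R[X]} (hp : p.natDegree ≤ q) : L p = 0 := by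
  rw [p.as_sum_range' (q + 1) (Nat.lt_succ_of_le hp), map_sum]
  refine Finset.sum_eq_zero fun k hk => ?_
  rw [← C_mul_X_pow_eq_monomial, ← smul_eq_C_mul, map_smul,
    hL k (Nat.lt_succ_iff.mp (Finset.mem_range.mp hk)), smul_zero]

theorem Polynomial.derivative_X_pow_eval_eq_smul {R ι : Type*} [CommSemiring R] (c : ι → R)
    (k : ℕ) : (fun i => (X ^ k : R[X]).derivative.eval (c i)) = (k : R) • fun i => c i ^ (k - 1) := by
  ext; simp [derivative_X_pow]

theorem Polynomial.natDegree_comp_C_add_X_mul_C_le {R : Type*} [CommSemiring R] (φ : R[X])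
    (a h : R) : (φ.comp (C a + X * C h)).natDegree ≤ φ.natDegree :=
  natDegree_comp_le.trans <| (Nat.mul_le_mul_left _ (by compute_degree!)).trans_eq (mul_one _)

section

variable {𝕜 : Type*} [Field 𝕜] [CharZero 𝕜] {s q : ℕ}

theorem dotProduct_derivative_eval_eq_sub_of_quadrature (b c : Fin s → 𝕜)
    (hB : ∀ k, 1 ≤ k → k ≤ q → (b ⬝ᵥ fun i => c i ^ (k - 1)) = (k : 𝕜)⁻¹)
    {p : 𝕜[X]} (hp : p.natDegree ≤ q) :
    (b ⬝ᵥ fun i => p.derivative.eval (c i)) = p.eval 1 - p.eval 0 := by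
  let L : 𝕜[X] →ₗ[𝕜] 𝕜 := ∑ i, b i • (leval (c i) ∘ₗ derivative) - (leval 1 - leval 0)
  have hL : ∀ p : 𝕜[X], L p = (b ⬝ᵥ fun i => p.derivative.eval (c i)) - (p.eval 1 - p.eval 0) :=
    fun p => by simp [L, dotProduct]
  rw [← sub_eq_zero, ← hL]
  refine p.linearMap_eq_zero_of_natDegree_le L (fun k hk => ?_) hp
  rcases Nat.eq_zero_or_pos k with rfl | hk0
  · simp [hL, ← Pi.zero_def]
  rw [hL, derivative_X_pow_eval_eq_smul, dotProduct_smul, hB k hk0 hk, smul_eq_mul,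
    mul_inv_cancel₀ (Nat.cast_ne_zero.mpr hk0.ne')]
  simp [zero_pow hk0.ne']

theorem dotProduct_stageDefect_eq_zero (A : Matrix (Fin s) (Fin s) 𝕜) (c w : Fin s → 𝕜)
    (hw : ∀ k, 1 ≤ k → k ≤ q →
      w ⬝ᵥ (A *ᵥ (fun i => c i ^ (k - 1)) - (k : 𝕜)⁻¹ • fun i => c i ^ k) = 0)
    {p : 𝕜[X]} (hp : p.natDegree ≤ q) :
    w ⬝ᵥ (A *ᵥ (fun i => p.derivative.eval (c i)) - fun i => p.eval (c i) - p.eval 0) = 0 := by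
  let L : 𝕜[X] →ₗ[𝕜] 𝕜 := dotProductBilin 𝕜 𝕜 w ∘ₗ
    (A.mulVecLin ∘ₗ (LinearMap.pi fun i => leval (c i) ∘ₗ derivative) -
      LinearMap.pi fun i => leval (c i) - leval 0)
  have hL : ∀ p : 𝕜[X], L p =
      w ⬝ᵥ (A *ᵥ (fun i => p.derivative.eval (c i)) - fun i => p.eval (c i) - p.eval 0) :=
    fun _ => rfl
  rw [← hL]
  refine p.linearMap_eq_zero_of_natDegree_le L (fun k hk => ?_) hp
  rcases Nat.eq_zero_or_pos k with rfl | hk0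
  · simp [hL, ← Pi.zero_def]
  have hdefect : (A *ᵥ fun i => (X ^ k : 𝕜[X]).derivative.eval (c i)) -
      (fun i => (X ^ k : 𝕜[X]).eval (c i) - (X ^ k : 𝕜[X]).eval 0) =
      (k : 𝕜) • (A *ᵥ (fun i => c i ^ (k - 1)) - (k : 𝕜)⁻¹ • fun i => c i ^ k) := by
    rw [derivative_X_pow_eval_eq_smul, mulVec_smul, smul_sub, smul_smul,
      mul_inv_cancel₀ (Nat.cast_ne_zero.mpr hk0.ne'), one_smul]
    ext; simp [zero_pow hk0.ne']
  rw [hL, hdefect, dotProduct_smul, hw k hk0 hk, smul_zero]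

end

-- `y` and `d` stand for the exact solution `p(c)` and its scaled derivative `p'(c)` at the stages.
theorem protheroRobinson_step_error_eq {𝕜 : Type*} [Field 𝕜] {s : ℕ}
    (A : Matrix (Fin s) (Fin s) 𝕜) (b : Fin s → 𝕜) {ζ : 𝕜} (hinv : (1 - ζ • A).det ≠ 0)
    {y d g : Fin s → 𝕜} {y₀ y₁ un un1 : 𝕜}
    (hg : g = (fun _ => un) + A *ᵥ (ζ • (g - y) + d))
    (hu : un1 = un + b ⬝ᵥ (ζ • (g - y) + d))
    (hquad : b ⬝ᵥ d = y₁ - y₀)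
    (hdefect : b ⬝ᵥ (1 - ζ • A)⁻¹ *ᵥ (A *ᵥ d - fun i => y i - y₀) = 0) :
    un1 - y₁ = (1 + ζ * (b ⬝ᵥ (1 - ζ • A)⁻¹ *ᵥ fun _ => 1)) * (un - y₀) := by
  set M := 1 - ζ • A
  have hMe : M *ᵥ (g - y) = (un - y₀) • (fun _ => 1) + (A *ᵥ d - fun i => y i - y₀) := by
    ext i
    have hgi := congrFun hg i
    simp only [M, sub_mulVec, one_mulVec, smul_mulVec, mulVec_add, mulVec_smul, Pi.add_apply,
      Pi.sub_apply, Pi.smul_apply, smul_eq_mul] at hgi ⊢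
    linear_combination hgi
  have he : g - y = M⁻¹ *ᵥ ((un - y₀) • (fun _ => 1) + (A *ᵥ d - fun i => y i - y₀)) := by
    rw [← hMe, mulVec_mulVec, nonsing_inv_mul _ (isUnit_iff_ne_zero.mpr hinv), one_mulVec]
  have hbe : b ⬝ᵥ (g - y) = (un - y₀) * (b ⬝ᵥ M⁻¹ *ᵥ fun _ => 1) := by
    rw [he, mulVec_add, dotProduct_add, hdefect, add_zero, mulVec_smul, dotProduct_smul,
      smul_eq_mul]
  rw [hu, dotProduct_add, dotProduct_smul, hbe, hquad, smul_eq_mul]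
  ring

theorem stmt15_general {s : ℕ} (A : Matrix (Fin s) (Fin s) ℝ) (b : Fin s → ℝ)
    (c : Fin s → ℝ)
    (q : ℕ)
    (hB : ∀ k, 1 ≤ k → k ≤ q → (b ⬝ᵥ fun i => c i ^ (k - 1)) = (k : ℝ)⁻¹)
    (lam Δt tn : ℝ) (ζ : ℝ) (hζ : ζ = lam * Δt)
    (hinv : (1 - ζ • A).det ≠ 0)
    (τ : ℕ → Fin s → ℝ)
    (hτ : ∀ k, τ k = A.mulVec (fun i => c i ^ (k - 1)) - (k : ℝ)⁻¹ • fun i => c i ^ k)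
    (hwso : ∀ k, 1 ≤ k → k ≤ q → b ⬝ᵥ (1 - ζ • A)⁻¹.mulVec (τ k) = 0)
    (φ : Polynomial ℝ) (hφ : φ.natDegree ≤ q)
    (un : ℝ) (g : Fin s → ℝ) (un1 : ℝ)
    (hg : ∀ i, g i = un + Δt * ∑ j, A i j *
      (lam * (g j - φ.eval (tn + c j * Δt)) +
        (Polynomial.derivative φ).eval (tn + c j * Δt)))
    (hu : un1 = un + Δt * ∑ j, b j *
      (lam * (g j - φ.eval (tn + c j * Δt)) +
        (Polynomial.derivative φ).eval (tn + c j * Δt)))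
    (R : ℝ) (hR : R = 1 + ζ * (b ⬝ᵥ (1 - ζ • A)⁻¹.mulVec fun _ => 1)) :
    un1 - φ.eval (tn + Δt) = R * (un - φ.eval tn) ∧
      (un = φ.eval tn → un1 = φ.eval (tn + Δt)) := by
  set p : ℝ[X] := φ.comp (C tn + X * C Δt)
  have hp : p.natDegree ≤ q := (φ.natDegree_comp_C_add_X_mul_C_le tn Δt).trans hφ
  have heval : ∀ x, p.eval x = φ.eval (tn + x * Δt) := fun x => by simp [p, mul_comm x]
  have hderiv : ∀ x, p.derivative.eval x = Δt * φ.derivative.eval (tn + x * Δt) :=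
    fun x => by simp [p, derivative_comp, mul_comm x]
  set y : Fin s → ℝ := fun i => p.eval (c i)
  set d : Fin s → ℝ := fun i => p.derivative.eval (c i)
  have hflux : ζ • (g - y) + d = Δt • fun j =>
      lam * (g j - φ.eval (tn + c j * Δt)) + φ.derivative.eval (tn + c j * Δt) := by
    ext j; simp only [y, d, heval, hderiv, hζ, Pi.add_apply, Pi.sub_apply, Pi.smul_apply,
      smul_eq_mul]; ring
  have hstage : g = (fun _ => un) + A *ᵥ (ζ • (g - y) + d) := by
    ext i; rw [hflux, mulVec_smul]; exact hg i
  have hupdate : un1 = un + b ⬝ᵥ (ζ • (g - y) + d) := by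
    rw [hflux, dotProduct_smul]; exact hu
  have hdefect : b ⬝ᵥ (1 - ζ • A)⁻¹ *ᵥ (A *ᵥ d - fun i => y i - p.eval 0) = 0 := by
    rw [dotProduct_mulVec]
    refine dotProduct_stageDefect_eq_zero A c _ (fun k hk hkq => ?_) hp
    rw [← dotProduct_mulVec, ← hτ, hwso k hk hkq]
  have hstep := protheroRobinson_step_error_eq A b hinv hstage hupdate
    (dotProduct_derivative_eval_eq_sub_of_quadrature b c hB hp) hdefect
  rw [heval, heval, zero_mul, add_zero, one_mul, ← hR] at hstep
  exact ⟨hstep, fun h => by rwa [h, sub_self, mul_zero, sub_eq_zero] at hstep⟩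

/-- Weak stage order removes order reduction exactly for polynomial Prothero–Robinson
data: under the quadrature conditions `B(q)` and the annihilation conditions
`bᵀ (I − ζA)⁻¹ τ⁽ᵏ⁾ = 0` (`1 ≤ k ≤ q`), for any polynomial `φ` of degree ≤ `q`,
one RK step for `f(t,u) = λ(u − φ(t)) + φ'(t)` satisfies
`u_{n+1} − φ(t_n + Δt) = R(ζ)(u_n − φ(t_n))`; in particular if `u_n = φ(t_n)` then
`u_{n+1} = φ(t_n + Δt)`. -/
theorem stmt15 {s : ℕ} (A : Matrix (Fin s) (Fin s) ℝ) (b : Fin s → ℝ)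
    (c : Fin s → ℝ) (hc : c = A.mulVec fun _ => 1)
    (q : ℕ) (hq : 1 ≤ q)
    (hB : ∀ k, 1 ≤ k → k ≤ q → (b ⬝ᵥ fun i => c i ^ (k - 1)) = (k : ℝ)⁻¹)
    (lam Δt tn : ℝ) (ζ : ℝ) (hζ : ζ = lam * Δt)
    (hinv : (1 - ζ • A).det ≠ 0)
    (τ : ℕ → Fin s → ℝ)
    (hτ : ∀ k, τ k = A.mulVec (fun i => c i ^ (k - 1)) - (k : ℝ)⁻¹ • fun i => c i ^ k)
    (hwso : ∀ k, 1 ≤ k → k ≤ q → b ⬝ᵥ (1 - ζ • A)⁻¹.mulVec (τ k) = 0)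
    (φ : Polynomial ℝ) (hφ : φ.natDegree ≤ q)
    (un : ℝ) (g : Fin s → ℝ) (un1 : ℝ)
    (hg : ∀ i, g i = un + Δt * ∑ j, A i j *
      (lam * (g j - φ.eval (tn + c j * Δt)) +
        (Polynomial.derivative φ).eval (tn + c j * Δt)))
    (hu : un1 = un + Δt * ∑ j, b j *
      (lam * (g j - φ.eval (tn + c j * Δt)) +
        (Polynomial.derivative φ).eval (tn + c j * Δt)))
    (R : ℝ) (hR : R = 1 + ζ * (b ⬝ᵥ (1 - ζ • A)⁻¹.mulVec fun _ => 1)) :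
    un1 - φ.eval (tn + Δt) = R * (un - φ.eval tn) ∧
      (un = φ.eval tn → un1 = φ.eval (tn + Δt)) :=
  stmt15_general A b c q hB lam Δt tn ζ hζ hinv τ hτ hwso φ hφ un g un1 hg hu R hR
end
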